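/- arXiv:1303.5947 — 10 statements merged into one kernel-verified Lean document; each statement's English description precedes it below -/
import Mathlib

section
/- Let n ≥ p ≥ 1 and ψ₁,…,ψₙ > 0, and let βᵢ be the coefficient of sⁱ in ∏_{j=1}^n (1 + ψⱼ s). Define F(s) = (∑_{i=p}^n βᵢ sⁱ)/∏_{i=1}^n (1 + ψᵢ s) for s ≥ 0 and F(s) = 0 for s < 0. Then F is a valid cumulative distribution function on ℝ: it is monotone nondecreasing, right-continuous, F(s) → 0 as s → −∞, and F(s) → 1 as s → +∞. -/
/-!
Write `Q(s) = ∏ⱼ (1 + ψⱼ s) = L(s) + H(s)`, where `L` collects the monomials of degree `< p` and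
`H` those of degree `≥ p`; all coefficients are nonnegative. For `0 ≤ x ≤ y` and `j < i` we have
`xⁱ yʲ ≤ yⁱ xʲ`, so termwise `H(x) L(y) ≤ H(y) L(x)`, which is exactly `F(x) ≤ F(y)`.
Since `deg L < p ≤ n = deg Q`, `F = 1 - L / Q` tends to `1` at `+∞`. Right-continuity is clear
because `Q ≥ Q(0) = 1` on `[0, ∞)`.
-/

open Finset Polynomial Filter

theorem pow_mul_pow_le_pow_mul_pow {R : Type*} [CommSemiring R] [PartialOrder R]
    [IsOrderedRing R] {x y : R} (hx : 0 ≤ x) (hxy : x ≤ y) {i j : ℕ} (hji : j ≤ i) :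
    x ^ i * y ^ j ≤ y ^ i * x ^ j := by
  obtain ⟨k, rfl⟩ := Nat.exists_eq_add_of_le hji
  calc x ^ (j + k) * y ^ j = x ^ k * (x ^ j * y ^ j) := by ring
    _ ≤ y ^ k * (x ^ j * y ^ j) :=
      mul_le_mul_of_nonneg_right (pow_le_pow_left₀ hx hxy k)
        (mul_nonneg (pow_nonneg hx j) (pow_nonneg (hx.trans hxy) j))
    _ = y ^ (j + k) * x ^ j := by ring

theorem sum_mul_sum_pow_le_of_le {R : Type*} [CommSemiring R] [PartialOrder R]
    [IsOrderedRing R] {S T : Finset ℕ} {a b : ℕ → R} (ha : ∀ i ∈ S, 0 ≤ a i)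
    (hb : ∀ j ∈ T, 0 ≤ b j) (hTS : ∀ i ∈ S, ∀ j ∈ T, j ≤ i) {x y : R} (hx : 0 ≤ x)
    (hxy : x ≤ y) :
    (∑ i ∈ S, a i * x ^ i) * ∑ j ∈ T, b j * y ^ j ≤
      (∑ i ∈ S, a i * y ^ i) * ∑ j ∈ T, b j * x ^ j := by
  simp only [sum_mul_sum]
  refine sum_le_sum fun i hi => sum_le_sum fun j hj => ?_
  calc a i * x ^ i * (b j * y ^ j) = a i * b j * (x ^ i * y ^ j) := by ring
    _ ≤ a i * b j * (y ^ i * x ^ j) :=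
      mul_le_mul_of_nonneg_left (pow_mul_pow_le_pow_mul_pow hx hxy (hTS i hi j hj))
        (mul_nonneg (ha i hi) (hb j hj))
    _ = a i * y ^ i * (b j * x ^ j) := by ring

namespace Polynomial

theorem eval_eq_sum_range_add_sum_Icc {R : Type*} [CommSemiring R] (Q : R[X]) {p : ℕ}
    (hp : p ≤ Q.natDegree + 1) (s : R) :
    Q.eval s = ∑ i ∈ range p, Q.coeff i * s ^ i +
      ∑ i ∈ Icc p Q.natDegree, Q.coeff i * s ^ i := by
  rw [eval_eq_sum_range, ← Ico_add_one_right_eq_Icc, sum_range_add_sum_Ico _ hp]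

theorem natDegree_one_add_C_mul_X {R : Type*} [Semiring R] {a : R} (ha : a ≠ 0) :
    (1 + C a * X).natDegree = 1 := by
  rw [add_comm, ← C_1, natDegree_linear ha]

theorem coeff_one_add_C_mul_X_nonneg {R : Type*} [Semiring R] [PartialOrder R]
    [ZeroLEOneClass R] {a : R} (ha : 0 ≤ a) (k : ℕ) : 0 ≤ (1 + C a * X).coeff k := by
  rw [coeff_add, coeff_one, coeff_C_mul_X]
  split_ifs <;> simp_all

variable {R : Type*} [CommSemiring R] [PartialOrder R] [IsOrderedRing R]

theorem coeff_prod_nonneg {ι : Type*} {s : Finset ι} {f : ι → R[X]}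
    (hf : ∀ i ∈ s, ∀ k, 0 ≤ (f i).coeff k) (k : ℕ) : 0 ≤ (∏ i ∈ s, f i).coeff k := by
  induction s using Finset.cons_induction generalizing k with
  | empty => rw [prod_empty, coeff_one]; split_ifs <;> simp
  | cons a s ha ih =>
    rw [prod_cons, coeff_mul]
    exact sum_nonneg fun x _ => mul_nonneg (hf a (mem_cons_self a s) _)
      (ih (fun i hi => hf i (mem_cons_of_mem hi)) _)

theorem coeff_zero_le_eval {Q : R[X]} (hQ : ∀ k, 0 ≤ Q.coeff k) {s : R} (hs : 0 ≤ s) :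
    Q.coeff 0 ≤ Q.eval s := by
  rw [eval_eq_sum_range]
  simpa using single_le_sum (fun i _ => mul_nonneg (hQ i) (pow_nonneg hs i))
    (mem_range.2 Q.natDegree.succ_pos)

noncomputable def tailFraction (Q : ℝ[X]) (p : ℕ) (s : ℝ) : ℝ :=
  if 0 ≤ s then (∑ i ∈ Icc p Q.natDegree, Q.coeff i * s ^ i) / Q.eval s else 0

theorem tendsto_tailFraction_atBot (Q : ℝ[X]) (p : ℕ) :
    Tendsto (Q.tailFraction p) atBot (nhds 0) :=
  tendsto_const_nhds.congr' <| by
    filter_upwards [eventually_lt_atBot 0] with s hs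
    exact (if_neg (not_le.2 hs)).symm

section tailFraction

variable {Q : ℝ[X]} (hQ : ∀ k, 0 ≤ Q.coeff k) (hQ0 : 0 < Q.coeff 0) {p : ℕ}
include hQ hQ0

theorem eval_pos_of_coeff_nonneg {s : ℝ} (hs : 0 ≤ s) : 0 < Q.eval s :=
  hQ0.trans_le (coeff_zero_le_eval hQ hs)

theorem tailFraction_nonneg (s : ℝ) : 0 ≤ Q.tailFraction p s := by
  unfold tailFraction
  split_ifs with hs
  · exact div_nonneg (sum_nonneg fun i _ => mul_nonneg (hQ i) (pow_nonneg hs i))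
      (eval_pos_of_coeff_nonneg hQ hQ0 hs).le
  · exact le_rfl

theorem monotone_tailFraction (hp : p ≤ Q.natDegree + 1) : Monotone (Q.tailFraction p) := by
  intro x y hxy
  by_cases hx : 0 ≤ x
  · have hy := hx.trans hxy
    simp only [tailFraction, if_pos hx, if_pos hy]
    rw [div_le_div_iff₀ (eval_pos_of_coeff_nonneg hQ hQ0 hx) (eval_pos_of_coeff_nonneg hQ hQ0 hy),
      eval_eq_sum_range_add_sum_Icc Q hp x, eval_eq_sum_range_add_sum_Icc Q hp y]
    have hcross := sum_mul_sum_pow_le_of_le (S := Icc p Q.natDegree) (T := range p)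
      (fun i _ => hQ i) (fun j _ => hQ j)
      (fun i hi j hj => ((mem_range.1 hj).trans_le (mem_Icc.1 hi).1).le) hx hxy
    linear_combination hcross
  · rw [tailFraction, if_neg hx]
    exact tailFraction_nonneg hQ hQ0 y

theorem continuousWithinAt_Ici_tailFraction (s : ℝ) :
    ContinuousWithinAt (Q.tailFraction p) (Set.Ici s) s := by
  rcases lt_or_ge s 0 with hs | hs
  · have hzero : Q.tailFraction p =ᶠ[nhds s] fun _ => 0 :=
      eventually_of_mem (Iio_mem_nhds hs) fun t ht => if_neg (not_le.2 ht)
    exact (continuousAt_const.congr hzero.symm).continuousWithinAt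
  · have hcont :
        ContinuousAt (fun t => (∑ i ∈ Icc p Q.natDegree, Q.coeff i * t ^ i) / Q.eval t) s := by
      fun_prop (disch := exact (eval_pos_of_coeff_nonneg hQ hQ0 hs).ne')
    exact hcont.continuousWithinAt.congr (fun t ht => if_pos (hs.trans ht)) (if_pos hs)

theorem tendsto_tailFraction_atTop (hp : p ≤ Q.natDegree) :
    Tendsto (Q.tailFraction p) atTop (nhds 1) := by
  set L : ℝ[X] := ∑ i : Fin p, C (Q.coeff i) * X ^ (i : ℕ)
  have hQ_ne : Q ≠ 0 := fun h => by simp [h] at hQ0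
  have hL : L.degree < Q.degree :=
    (degree_sum_fin_lt _).trans_le (by rw [degree_eq_natDegree hQ_ne]; exact_mod_cast hp)
  have hlim : Tendsto (fun s => 1 - L.eval s / Q.eval s) atTop (nhds 1) := by
    simpa using (div_tendsto_atTop_zero_of_degree_lt L Q hL).const_sub 1
  refine hlim.congr' ?_
  filter_upwards [eventually_ge_atTop 0] with s hs
  have hL_eval : L.eval s = ∑ i ∈ range p, Q.coeff i * s ^ i := by
    simp [L, eval_finsetSum, Fin.sum_univ_eq_sum_range (fun i => Q.coeff i * s ^ i)]
  have hQs := (eval_pos_of_coeff_nonneg hQ hQ0 hs).ne'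
  rw [tailFraction, if_pos hs, eq_div_iff hQs, sub_mul, div_mul_cancel₀ _ hQs, hL_eval,
    eval_eq_sum_range_add_sum_Icc Q (hp.trans Q.natDegree.le_succ) s]
  ring

end tailFraction

end Polynomial

theorem stmt_2_general (n p : ℕ) (hnp : p ≤ n) (ψ : Fin n → ℝ)
    (hpos : ∀ i, 0 < ψ i)
    (β : ℕ → ℝ)
    (hβ : ∀ i, β i = (∏ j, (1 + C (ψ j) * X : Polynomial ℝ)).coeff i)
    (F : ℝ → ℝ)
    (hF : ∀ s : ℝ,
      F s = if 0 ≤ s then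
        (∑ i ∈ Finset.Icc p n, β i * s ^ i) / ∏ i, (1 + ψ i * s)
      else 0) :
    Monotone F ∧ (∀ s : ℝ, ContinuousWithinAt F (Set.Ici s) s) ∧
      Tendsto F atBot (nhds 0) ∧ Tendsto F atTop (nhds 1) := by
  set Q : ℝ[X] := ∏ j, (1 + C (ψ j) * X)
  have hQ : ∀ k, 0 ≤ Q.coeff k :=
    coeff_prod_nonneg fun j _ => coeff_one_add_C_mul_X_nonneg (hpos j).le
  have hQ0 : 0 < Q.coeff 0 := by simp [Q, coeff_zero_prod]
  have hQ_natDegree : Q.natDegree = n := by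
    rw [natDegree_prod _ _ fun j _ h => by
      simpa [h] using natDegree_one_add_C_mul_X (hpos j).ne']
    simp [natDegree_one_add_C_mul_X (hpos _).ne']
  have hF_eq : F = Q.tailFraction p := by
    funext s
    simp [hF, tailFraction, hQ_natDegree, hβ, Q, eval_prod]
  subst hF_eq
  exact ⟨monotone_tailFraction hQ hQ0 (by omega), continuousWithinAt_Ici_tailFraction hQ hQ0,
    tendsto_tailFraction_atBot Q p, tendsto_tailFraction_atTop hQ hQ0 (by omega)⟩

/-- The closed-form expression of Theorem 3.1 is a valid CDF on ℝ. -/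
theorem stmt_2 (n p : ℕ) (hp : 1 ≤ p) (hnp : p ≤ n) (ψ : Fin n → ℝ)
    (hpos : ∀ i, 0 < ψ i)
    (β : ℕ → ℝ)
    (hβ : ∀ i, β i = (∏ j, (1 + C (ψ j) * X : Polynomial ℝ)).coeff i)
    (F : ℝ → ℝ)
    (hF : ∀ s : ℝ,
      F s = if 0 ≤ s then
        (∑ i ∈ Finset.Icc p n, β i * s ^ i) / ∏ i, (1 + ψ i * s)
      else 0) :
    Monotone F ∧ (∀ s : ℝ, ContinuousWithinAt F (Set.Ici s) s) ∧
      Tendsto F atBot (nhds 0) ∧ Tendsto F atTop (nhds 1) :=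
  stmt_2_general n p hnp ψ hpos β hβ F hF
end

section
/- Let p ≥ 1 and let ψ₁,…,ψ_p be positive and pairwise distinct. Define f(s) = (1/V(Ψ)) · det M(s), where M(s) is the p×p matrix whose first column has entries ψᵢ/(1+ψᵢ s)² and whose j-th column (2 ≤ j ≤ p) has entries ψᵢ^{j-1}, and V(Ψ) = ∏_{1≤i<j≤p}(ψⱼ − ψᵢ) is the Vandermonde determinant. Then for all s ≥ 0, ∫₀^s f(x) dx = (∏_{i=1}^p ψᵢ) s^p / ∏_{i=1}^p (1 + ψᵢ s). -/
/-!
The determinant is linear in its first column, so integrating `f` amounts to integrating that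
column entrywise: `ψ / (1 + ψ x) ^ 2` has the antiderivative `ψ x / (1 + ψ x)`, which vanishes
at `0`. It remains to evaluate the determinant whose first column is `ψᵢ s / (1 + ψᵢ s)`.
Multiplying row `i` by `1 + ψᵢ s` and pulling out `ψᵢ` leaves the rows
`(s, 1 + ψᵢ s, ψᵢ (1 + ψᵢ s), …)`, i.e. the Vandermonde matrix times the upper bidiagonal matrix
with `s` on the diagonal and `1` above it, whose determinant is `V · s ^ p`.
-/

open Finset Matrix Set intervalIntegral

namespace Matrix

variable {n : Type*} [Fintype n] [DecidableEq n] {R : Type*} [CommRing R]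

theorem det_updateCol_eq_sum_adjugate (A : Matrix n n R) (j : n) (w : n → R) :
    (A.updateCol j w).det = ∑ i, A.adjugate j i * w i := by
  rw [← cramer_apply, cramer_eq_adjugate_mulVec]
  rfl

theorem integral_det_updateCol (A : Matrix n n ℝ) (j : n) {u v : n → ℝ → ℝ} {a b : ℝ}
    (hv : ∀ i, ∀ x ∈ uIcc a b, HasDerivAt (v i) (u i x) x)
    (hu : ∀ i, IntervalIntegrable (u i) MeasureTheory.volume a b) :
    ∫ x in a..b, (A.updateCol j fun i => u i x).det =
      (A.updateCol j fun i => v i b - v i a).det := by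
  simp_rw [det_updateCol_eq_sum_adjugate]
  rw [integral_finsetSum fun i _ => (hu i).const_mul _]
  refine sum_congr rfl fun i _ => ?_
  rw [integral_const_mul, integral_eq_sub_of_hasDerivAt (hv i) (hu i)]

theorem updateCol_zero_vandermonde {m : ℕ} (ψ w : Fin (m + 1) → R) :
    (vandermonde ψ).updateCol 0 w =
      of fun i j : Fin (m + 1) => if (j : ℕ) = 0 then w i else ψ i ^ (j : ℕ) := by
  ext i j
  simp [updateCol_apply, ← Fin.val_eq_zero_iff]

theorem det_bidiagonal {m : ℕ} (s : R) :
    (of fun j k : Fin m => if j = k then s else if (j : ℕ) + 1 = k then 1 else 0).det =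
      s ^ m := by
  rw [det_of_isUpperTriangular]
  · simp
  · intro j k hkj
    have hkj' : (k : ℕ) < j := hkj
    simp only [of_apply, if_neg (Fin.ne_of_gt hkj'), if_neg (show (j : ℕ) + 1 ≠ k by omega)]

theorem mul_vandermonde_mul_bidiagonal_apply {m : ℕ} (ψ : Fin (m + 1) → R) (s : R)
    (i k : Fin (m + 1)) :
    ψ i * (vandermonde ψ * of fun j k : Fin (m + 1) =>
        if j = k then s else if (j : ℕ) + 1 = k then 1 else 0) i k =
      if (k : ℕ) = 0 then ψ i * s else (1 + ψ i * s) * ψ i ^ (k : ℕ) := by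
  induction k using Fin.cases with
  | zero => simp [mul_apply]
  | succ k =>
    rw [mul_apply, sum_eq_add k.succ k.castSucc Fin.castSucc_lt_succ.ne' ?_ (by simp) (by simp)]
    · simp [Fin.ext_iff]
      ring
    · intro j _ hj
      simp only [Ne, Fin.ext_iff, Fin.val_succ, Fin.val_castSucc] at hj
      simp [Fin.ext_iff, hj.1, hj.2]

theorem det_updateCol_zero_vandermonde_mul_prod {K : Type*} [Field K] {m : ℕ}
    (ψ : Fin (m + 1) → K) (s : K) (h : ∀ i, 1 + ψ i * s ≠ 0) :
    ((vandermonde ψ).updateCol 0 fun i => ψ i * s / (1 + ψ i * s)).det * ∏ i, (1 + ψ i * s) =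
      (∏ i, ψ i) * (vandermonde ψ).det * s ^ (m + 1) := by
  set C : Matrix (Fin (m + 1)) (Fin (m + 1)) K :=
    of fun j k => if j = k then s else if (j : ℕ) + 1 = k then 1 else 0
  have hrows : (of fun i k => (1 + ψ i * s) *
      ((vandermonde ψ).updateCol 0 fun i => ψ i * s / (1 + ψ i * s)) i k) =
      of fun i k => ψ i * (vandermonde ψ * C) i k := by
    ext i k
    simp only [of_apply, mul_vandermonde_mul_bidiagonal_apply, updateCol_zero_vandermonde, C]
    split_ifs
    · exact mul_div_cancel₀ _ (h i)
    · rfl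
  rw [mul_comm, ← det_mul_column, hrows, det_mul_column, det_mul, det_bidiagonal, mul_assoc]

end Matrix

theorem hasDerivAt_mul_div_one_add_mul {c x : ℝ} (h : 1 + c * x ≠ 0) :
    HasDerivAt (fun x => c * x / (1 + c * x)) (c / (1 + c * x) ^ 2) x := by
  have hnum : HasDerivAt (fun x => c * x) c x := by simpa using (hasDerivAt_id x).const_mul c
  exact (hnum.fun_div (hnum.const_add 1) h).congr_deriv (by ring)

/-- The key integral computation in Lemma A.6 (case n = p) of the paper. -/
theorem stmt_4 (p : ℕ) (hp : 1 ≤ p) (ψ : Fin p → ℝ)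
    (hpos : ∀ i, 0 < ψ i) (hdist : ∀ i j, i ≠ j → ψ i ≠ ψ j)
    (V : ℝ) (hV : V = ∏ i, ∏ j ∈ Finset.Ioi i, (ψ j - ψ i))
    (f : ℝ → ℝ)
    (hf : ∀ s : ℝ, f s = (1 / V) *
      (Matrix.of fun i j : Fin p =>
        if (j : ℕ) = 0 then ψ i / (1 + ψ i * s) ^ 2 else ψ i ^ (j : ℕ)).det)
    (s : ℝ) (hs : 0 ≤ s) :
    ∫ x in (0 : ℝ)..s, f x =
      (∏ i, ψ i) * s ^ p / ∏ i, (1 + ψ i * s) := by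
  obtain ⟨m, rfl⟩ := Nat.exists_eq_add_of_le' hp
  have hden : ∀ i, ∀ x ∈ uIcc 0 s, 1 + ψ i * x ≠ 0 := fun i x hx => by
    rw [uIcc_of_le hs] at hx
    have := mul_nonneg (hpos i).le hx.1
    positivity
  rw [← det_vandermonde] at hV
  have hV0 : V ≠ 0 :=
    hV ▸ det_vandermonde_ne_zero_iff.2 fun i j hij => by_contra fun h => hdist i j h hij
  simp_rw [hf, ← updateCol_zero_vandermonde]
  rw [integral_const_mul,
    integral_det_updateCol _ _ (fun i x hx => hasDerivAt_mul_div_one_add_mul (hden i x hx))]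
  · have hprod : ∏ i, (1 + ψ i * s) ≠ 0 :=
      prod_ne_zero_iff.2 fun i _ => hden i s right_mem_uIcc
    simp only [mul_zero, zero_div, sub_zero]
    rw [eq_div_iff hprod, mul_assoc,
      det_updateCol_zero_vandermonde_mul_prod _ _ fun i => hden i s right_mem_uIcc, ← hV]
    field_simp
  · intro i
    refine ContinuousOn.intervalIntegrable fun x hx => ?_
    fun_prop (disch := exact pow_ne_zero 2 (hden i x hx))
end

section
/- Let p ≥ 1 and let ψ₁,…,ψ_p be positive and pairwise distinct, with Vandermonde determinant V(Ψ) = ∏_{1≤i<j≤p}(ψⱼ − ψᵢ). Then for all s ≥ 0, 1 − (1/V(Ψ)) · det N(s) = (∏_{i=1}^p ψᵢ) s^p / ∏_{i=1}^p (1 + ψᵢ s), where N(s) is the p×p matrix whose first column has entries 1/(1+ψᵢ s) and whose j-th column (2 ≤ j ≤ p) has entries ψᵢ^{j-1}. -/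
/-!
Write `A` for the Vandermonde matrix of `ψ` and `u i = 1 / (1 + ψ i * s)`. Entrywise
`1 = u + s * ψ * u`, so linearity of the determinant in the first column gives
`det A = det N(s) + s * det A'`, where `A'` is `A` with first column `ψ * u`. Dividing row `i`
of `A'` by `ψ i * u i` leaves the columns `1, ψ (1 + s ψ), …, ψ ^ (p - 1) (1 + s ψ)`: the values
at the nodes of polynomials of degree `≤ j` with leading coefficients `1, s, …, s`. Hence
`det A' = (∏ i, ψ i * u i) * s ^ (p - 1) * det A`.
-/

open Finset Matrix Polynomial

namespace Matrix

theorem det_eval_matrixOfPolynomials_eq_det_vandermonde_mul_prod_coeff {R : Type*} [CommRing R]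
    {n : ℕ} (v : Fin n → R) (p : Fin n → R[X]) (h_deg : ∀ i, (p i).natDegree ≤ i) :
    (of fun i j => (p j).eval (v i)).det = (vandermonde v).det * ∏ j, (p j).coeff j := by
  rw [eval_matrixOfPolynomials_eq_vandermonde_mul_matrixOfPolynomials v p h_deg, det_mul,
    det_of_isUpperTriangular (matrixOfPolynomials_blockTriangular p h_deg)]
  rfl

variable {K : Type*} [Field K] {n : ℕ}

theorem det_vandermonde_updateCol_zero_div_one_add_mul (ψ : Fin (n + 1) → K) (s : K)
    (hψ : ∀ i, 1 + ψ i * s ≠ 0) :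
    (updateCol (vandermonde ψ) 0 fun i => ψ i / (1 + ψ i * s)).det =
      (∏ i, ψ i / (1 + ψ i * s)) * s ^ n * (vandermonde ψ).det := by
  let p : Fin (n + 1) → K[X] := Fin.cons 1 fun j => (C s * X + 1) * X ^ (j : ℕ)
  have hrow : (updateCol (vandermonde ψ) 0 fun i => ψ i / (1 + ψ i * s)) =
      of fun i j => ψ i / (1 + ψ i * s) * (p j).eval (ψ i) := by
    ext i j
    refine Fin.cases ?_ (fun j => ?_) j
    · simp [p]
    · simp [p, vandermonde_apply, pow_succ]
      field_simp [hψ i]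
      ring
  have hdeg : ∀ j, (p j).natDegree ≤ j := by
    refine Fin.cases (by simp [p]) (fun j => ?_)
    simp only [p, Fin.cons_succ, Fin.val_succ]
    compute_degree
    omega
  have hlead : ∏ j, (p j).coeff j = s ^ n := by
    simp only [p, Fin.prod_univ_succ, Fin.cons_zero, Fin.cons_succ, Fin.val_zero, Fin.val_succ,
      coeff_one_zero, one_mul, add_comm _ 1, coeff_mul_X_pow]
    simp [coeff_one]
  rw [hrow]
  refine (det_mul_column _ (of fun i j => (p j).eval (ψ i))).trans ?_
  rw [det_eval_matrixOfPolynomials_eq_det_vandermonde_mul_prod_coeff ψ p hdeg, hlead]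
  ring

theorem det_vandermonde_updateCol_zero_one_div_one_add_mul (ψ : Fin (n + 1) → K) (s : K)
    (hψ : ∀ i, 1 + ψ i * s ≠ 0) :
    (updateCol (vandermonde ψ) 0 fun i => 1 / (1 + ψ i * s)).det =
      (1 - s ^ (n + 1) * ∏ i, ψ i / (1 + ψ i * s)) * (vandermonde ψ).det := by
  have hsplit : (fun i => vandermonde ψ i 0) =
      (fun i => 1 / (1 + ψ i * s)) + s • fun i => ψ i / (1 + ψ i * s) := by
    funext i
    simp only [vandermonde_apply, Fin.val_zero, pow_zero, Pi.add_apply, Pi.smul_apply,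
      smul_eq_mul]
    field_simp [hψ i]
  have hdet : (vandermonde ψ).det =
      (updateCol (vandermonde ψ) 0 fun i => 1 / (1 + ψ i * s)).det +
        s * (updateCol (vandermonde ψ) 0 fun i => ψ i / (1 + ψ i * s)).det := by
    conv_lhs => rw [← updateCol_eq_self (vandermonde ψ) 0, hsplit]
    rw [det_updateCol_add, det_updateCol_smul]
  rw [det_vandermonde_updateCol_zero_div_one_add_mul ψ s hψ] at hdet
  linear_combination -hdet

end Matrix

/-- The determinantal identity at the end of the proof of Lemma A.6. -/
theorem stmt_5 (p : ℕ) (hp : 1 ≤ p) (ψ : Fin p → ℝ)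
    (hpos : ∀ i, 0 < ψ i) (hdist : ∀ i j, i ≠ j → ψ i ≠ ψ j)
    (V : ℝ) (hV : V = ∏ i, ∏ j ∈ Finset.Ioi i, (ψ j - ψ i))
    (s : ℝ) (hs : 0 ≤ s) :
    1 - (1 / V) *
      (Matrix.of fun i j : Fin p =>
        if (j : ℕ) = 0 then 1 / (1 + ψ i * s) else ψ i ^ (j : ℕ)).det =
      (∏ i, ψ i) * s ^ p / ∏ i, (1 + ψ i * s) := by
  obtain ⟨n, rfl⟩ : ∃ n, p = n + 1 := ⟨p - 1, by omega⟩
  have hψs : ∀ i, 1 + ψ i * s ≠ 0 := fun i => by have := hpos i; positivity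
  have hV0 : V ≠ 0 := by
    rw [hV, ← det_vandermonde, det_vandermonde_ne_zero_iff]
    exact fun i j hij => by_contra fun hne => hdist i j hne hij
  have hN : (of fun i j : Fin (n + 1) =>
      if (j : ℕ) = 0 then 1 / (1 + ψ i * s) else ψ i ^ (j : ℕ)) =
      updateCol (vandermonde ψ) 0 fun i => 1 / (1 + ψ i * s) := by
    ext i j
    rcases eq_or_ne j 0 with rfl | hj
    · simp
    · simp [hj, vandermonde_apply]
  rw [hN, det_vandermonde_updateCol_zero_one_div_one_add_mul ψ s hψs, det_vandermonde, ← hV,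
    one_div, mul_comm _ V, inv_mul_cancel_left₀ hV0, prod_div_distrib]
  ring
end

section
/- Let M ≥ 1, N_R ≥ 1 with N_R ≤ M − 1, and η > 0. Define F(s) = 1 − e^{−s/η} · (∑_{i=0}^{N_R−1} C(M−1, i) sⁱ)/(1+s)^{M−1} for s ≥ 0, where C(M−1,i) is the binomial coefficient. Then F is a valid CDF on [0, ∞): F(0) = 0, F is nondecreasing on [0,∞), and F(s) → 1 as s → ∞. -/
open Finset Filter Real

/-!
Write `1 - F(s) = e^{-s/η} R(s)` with `R(s) = P(s) / (1+s)^m`, `P(s) = ∑_{i<n} C(m,i) sⁱ`,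
`m = M - 1` and `n = N_R`. The identity `(k+1) C(m,k+1) = (m-k) C(m,k)` makes
`P'(s)(1+s) - m P(s)` telescope to the single term `-n C(m,n) s^{n-1}`, so
`R' = -n C(m,n) s^{n-1} / (1+s)^{m+1} ≤ 0` on `[0, ∞)`. Hence `R` decreases from `R(0) = 1` and
stays nonnegative, and multiplying by the decreasing factor `e^{-s/η} → 0` shows that `1 - F`
decreases from `1` to `0`.
-/

lemma Nat.succ_mul_choose_succ_add_mul_choose (m k : ℕ) :
    (k + 1) * m.choose (k + 1) + k * m.choose k = m * m.choose k := by
  rcases le_or_gt k m with hkm | hmk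
  · rw [mul_comm (k + 1), Nat.choose_succ_right_eq, mul_comm k, ← mul_add,
      Nat.sub_add_cancel hkm, mul_comm]
  · simp [Nat.choose_eq_zero_of_lt hmk, Nat.choose_eq_zero_of_lt (hmk.trans k.lt_succ_self)]

/-- `binomPartialRatio m n s = P(Bin(m, p) < n)` for the success probability `p = s / (1 + s)`. -/
noncomputable def binomPartialRatio (m n : ℕ) (s : ℝ) : ℝ :=
  (∑ i ∈ range n, (m.choose i : ℝ) * s ^ i) / (1 + s) ^ m

lemma sum_choose_mul_deriv_pow_mul_one_add (m K : ℕ) (s : ℝ) :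
    (∑ i ∈ range (K + 1), (m.choose i : ℝ) * (i * s ^ (i - 1))) * (1 + s) =
      m * ∑ i ∈ range (K + 1), (m.choose i : ℝ) * s ^ i
        - (K + 1) * m.choose (K + 1) * s ^ K := by
  induction K with
  | zero => simp
  | succ K ih =>
    have hchoose : ((K + 2 : ℕ) : ℝ) * m.choose (K + 2) + ((K + 1 : ℕ) : ℝ) * m.choose (K + 1)
        = m * m.choose (K + 1) := by
      exact_mod_cast Nat.succ_mul_choose_succ_add_mul_choose m (K + 1)
    rw [sum_range_succ, sum_range_succ (fun i => (m.choose i : ℝ) * s ^ i)]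
    push_cast at hchoose ⊢
    linear_combination ih + s ^ (K + 1) * hchoose

lemma hasDerivAt_binomPartialRatio_succ (m K : ℕ) {s : ℝ} (hs : 1 + s ≠ 0) :
    HasDerivAt (binomPartialRatio m (K + 1))
      (-((K + 1) * m.choose (K + 1) * s ^ K) / (1 + s) ^ (m + 1)) s := by
  have hsum : HasDerivAt (fun t => ∑ i ∈ range (K + 1), (m.choose i : ℝ) * t ^ i)
      (∑ i ∈ range (K + 1), (m.choose i : ℝ) * (i * s ^ (i - 1))) s :=
    HasDerivAt.fun_sum fun i _ => (hasDerivAt_pow i s).const_mul _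
  have hpow : HasDerivAt (fun t : ℝ => (1 + t) ^ m) (m * (1 + s) ^ (m - 1)) s := by
    simpa using ((hasDerivAt_id s).const_add 1).fun_pow m
  refine (hsum.div hpow (pow_ne_zero m hs)).congr_deriv ?_
  have key := sum_choose_mul_deriv_pow_mul_one_add m K s
  rcases m with _ | n
  · simpa [hs] using key
  · rw [Nat.add_sub_cancel, div_eq_div_iff (by positivity) (by positivity)]
    push_cast at key ⊢
    linear_combination (1 + s) ^ n * (1 + s) ^ (n + 2) * key

lemma antitoneOn_binomPartialRatio (m n : ℕ) :
    AntitoneOn (binomPartialRatio m n) (Set.Ici 0) := by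
  rcases n with _ | K
  · intro a _ b _ _
    simp [binomPartialRatio]
  have hderiv (s : ℝ) (hs : s ∈ Set.Ici 0) := hasDerivAt_binomPartialRatio_succ m K
    (s := s) (by linarith [Set.mem_Ici.1 hs])
  refine antitoneOn_of_hasDerivWithinAt_nonpos (convex_Ici 0)
    (fun s hs => (hderiv s hs).continuousAt.continuousWithinAt)
    (fun s hs => (hderiv s (interior_subset hs)).hasDerivWithinAt) fun s hs => ?_
  have hs : 0 ≤ s := interior_subset (s := Set.Ici (0 : ℝ)) hs
  exact div_nonpos_of_nonpos_of_nonneg (neg_nonpos.2 (by positivity)) (by positivity)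

lemma binomPartialRatio_nonneg (m n : ℕ) {s : ℝ} (hs : 0 ≤ s) : 0 ≤ binomPartialRatio m n s := by
  unfold binomPartialRatio
  positivity

lemma binomPartialRatio_zero (m : ℕ) {n : ℕ} (hn : 1 ≤ n) : binomPartialRatio m n 0 = 1 := by
  rw [binomPartialRatio, sum_eq_single_of_mem 0 (mem_range.mpr hn)
    (fun i _ hi => by simp [zero_pow hi])]
  simp

lemma antitoneOn_exp_mul_binomPartialRatio (m n : ℕ) {η : ℝ} (hη : 0 ≤ η) :
    AntitoneOn (fun s => exp (-s / η) * binomPartialRatio m n s) (Set.Ici 0) := by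
  intro a ha b hb hab
  have hexp : exp (-b / η) ≤ exp (-a / η) :=
    exp_le_exp.2 (div_le_div_of_nonneg_right (neg_le_neg hab) hη)
  exact mul_le_mul hexp (antitoneOn_binomPartialRatio m n ha hb hab)
    (binomPartialRatio_nonneg m n hb) (exp_pos _).le

lemma tendsto_exp_mul_binomPartialRatio_atTop (m n : ℕ) {η : ℝ} (hη : 0 < η) :
    Tendsto (fun s => exp (-s / η) * binomPartialRatio m n s) atTop (nhds 0) := by
  have hexp : Tendsto (fun s => exp (-s / η)) atTop (nhds 0) := by
    simpa only [Function.comp_def, neg_div, id] using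
      tendsto_exp_neg_atTop_nhds_zero.comp (tendsto_id.atTop_div_const hη)
  refine squeeze_zero' ?_ ?_ (by simpa using hexp.mul_const (binomPartialRatio m n 0))
  · filter_upwards [eventually_ge_atTop 0] with s hs
    exact mul_nonneg (exp_pos _).le (binomPartialRatio_nonneg m n hs)
  · filter_upwards [eventually_ge_atTop 0] with s hs
    exact mul_le_mul_of_nonneg_left
      (antitoneOn_binomPartialRatio m n Set.self_mem_Ici hs hs) (exp_pos _).le

theorem stmt_6_general (M NR : ℕ) (hNR : 1 ≤ NR)
    (η : ℝ) (hη : 0 < η)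
    (F : ℝ → ℝ)
    (hF : ∀ s : ℝ, 0 ≤ s → F s = 1 - Real.exp (-s / η) *
        (∑ i ∈ Finset.range NR, ((M - 1).choose i : ℝ) * s ^ i) /
          (1 + s) ^ (M - 1)) :
    F 0 = 0 ∧ MonotoneOn F (Set.Ici 0) ∧ Tendsto F atTop (nhds 1) := by
  set G := fun s => exp (-s / η) * binomPartialRatio (M - 1) NR s
  have hFG (s : ℝ) (hs : 0 ≤ s) : F s = 1 - G s := by
    rw [hF s hs, mul_div_assoc]
    rfl
  refine ⟨?_, fun a ha b hb hab => ?_, ?_⟩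
  · simp [hFG 0 le_rfl, G, binomPartialRatio_zero (M - 1) hNR]
  · rw [hFG a ha, hFG b hb]
    linarith [antitoneOn_exp_mul_binomPartialRatio (M - 1) NR hη.le ha hb hab]
  · have hG := (tendsto_exp_mul_binomPartialRatio_atTop (M - 1) NR hη).const_sub 1
    rw [sub_zero] at hG
    exact hG.congr' ((eventually_ge_atTop 0).mono fun s hs => (hFG s hs).symm)

/-- Single-cell specialization of Corollary 3.1: the RBF-MMSE SINR CDF is a
valid CDF on [0, ∞). -/
theorem stmt_6 (M NR : ℕ) (hM : 1 ≤ M) (hNR : 1 ≤ NR) (hle : NR ≤ M - 1)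
    (η : ℝ) (hη : 0 < η)
    (F : ℝ → ℝ)
    (hF : ∀ s : ℝ, 0 ≤ s → F s = 1 - Real.exp (-s / η) *
        (∑ i ∈ Finset.range NR, ((M - 1).choose i : ℝ) * s ^ i) /
          (1 + s) ^ (M - 1)) :
    F 0 = 0 ∧ MonotoneOn F (Set.Ici 0) ∧ Tendsto F atTop (nhds 1) :=
  stmt_6_general M NR hNR η hη F hF
end

section
/- Let V ≥ 0 be a real random variable, η > 0, and N_R ≥ 1 an integer. Suppose that conditionally on V = v, the random variable S has the Gamma-type conditional density f_{S|V}(s|v) = s^{N_R−1}(v + 1/η)^{N_R} e^{−(v+1/η)s}/Γ(N_R) for s ≥ 0. Then the unconditional CDF of S satisfies F_S(s) = 1 − e^{−s/η} ∑_{k=0}^{N_R−1} ∑_{m=0}^{k} (s^k / ((k−m)! m! η^{k−m})) · E[V^m e^{−sV}]. -/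
open Finset MeasureTheory ProbabilityTheory
open Real Nat

/-!
Given `V = v`, the event `S ≤ s` is `X ≤ a` with `a = s (v + 1/η)`, whose probability is the
Erlang CDF `1 - e^{-a} ∑_{k < N_R} a^k / k!` (the derivative of `-e^{-a} ∑_{k ≤ n} a^k / k!`
telescopes to the Gamma density). By independence, `P(S ≤ s)` is the expectation of this
expression in `V`. Expanding `(v + 1/η)^k` binomially and integrating term by term gives the
formula; every term is integrable because `s^k v^m e^{-sv} ≤ m! s^{k-m}` for `m ≤ k` and
`s, v ≥ 0`.
-/

lemma hasDerivAt_exp_neg_mul_sum_pow_div_factorial (n : ℕ) (x : ℝ) :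
    HasDerivAt (fun y ↦ exp (-y) * ∑ k ∈ range (n + 1), y ^ k / k !)
      (-(exp (-x) * (x ^ n / n !))) x := by
  have hexp : HasDerivAt (fun y ↦ exp (-y)) (-exp (-x)) x := by
    simpa using (hasDerivAt_neg x).exp
  induction n with
  | zero => simpa using hexp
  | succ n ih =>
    have hterm := hexp.fun_mul ((hasDerivAt_pow (n + 1) x).div_const ((n + 1)! : ℝ))
    simp_rw [sum_range_succ _ (n + 1), mul_add]
    refine (ih.add hterm).congr_deriv ?_
    rw [factorial_succ]
    push_cast
    field_simp
    ring

lemma gammaPDFReal_natCast_succ (n : ℕ) (r : ℝ) {x : ℝ} (hx : 0 ≤ x) :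
    gammaPDFReal (n + 1) r x = r * (exp (-(r * x)) * ((r * x) ^ n / n !)) := by
  rw [gammaPDFReal, if_pos hx, add_sub_cancel_right, Gamma_nat_eq_factorial, ← Nat.cast_add_one,
    rpow_natCast, rpow_natCast]
  ring

lemma cdf_gammaMeasure_natCast_succ (n : ℕ) {r : ℝ} (hr : 0 < r) {t : ℝ} (ht : 0 ≤ t) :
    cdf (gammaMeasure (n + 1) r) t =
      1 - exp (-(r * t)) * ∑ k ∈ range (n + 1), (r * t) ^ k / k ! := by
  set F : ℝ → ℝ := fun x ↦ -(exp (-(r * x)) * ∑ k ∈ range (n + 1), (r * x) ^ k / k !)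
  have hF : ∀ x, HasDerivAt F (r * (exp (-(r * x)) * ((r * x) ^ n / n !))) x := fun x ↦ by
    refine (((hasDerivAt_exp_neg_mul_sum_pow_div_factorial n (r * x)).comp x
      ((hasDerivAt_id x).const_mul r)).neg).congr_deriv ?_
    ring
  rw [cdf_gammaMeasure_eq_integral (by positivity) hr,
    setIntegral_eq_of_subset_of_forall_sdiff_eq_zero measurableSet_Iic Set.Icc_subset_Iic_self
      (fun x ⟨hxt, hx⟩ ↦ if_neg fun h0 ↦ hx ⟨h0, hxt⟩),
    integral_Icc_eq_integral_Ioc, ← intervalIntegral.integral_of_le ht,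
    intervalIntegral.integral_congr (g := fun x ↦ r * (exp (-(r * x)) * ((r * x) ^ n / n !)))
      (fun x hx ↦ gammaPDFReal_natCast_succ n r (by simp_all)),
    intervalIntegral.integral_eq_sub_of_hasDerivAt (fun x _ ↦ hF x)
      (by apply Continuous.intervalIntegrable; fun_prop)]
  rw [show F 0 = -1 by simp [F, sum_range_succ']]
  ring

lemma measureReal_le_comp_eq_integral_cdf {Ω β : Type*} [MeasurableSpace Ω] [MeasurableSpace β]
    {μ : Measure Ω} [IsProbabilityMeasure μ] {X : Ω → ℝ} {V : Ω → β}
    (hX : Measurable X) (hV : Measurable V) (hXV : IndepFun X V μ) {h : β → ℝ}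
    (hh : Measurable h) :
    μ.real {ω | X ω ≤ h (V ω)} = ∫ ω, cdf (μ.map X) (h (V ω)) ∂μ := by
  have := Measure.isProbabilityMeasure_map (μ := μ) hX.aemeasurable
  have hA : MeasurableSet {p : ℝ × β | p.1 ≤ h p.2} :=
    measurableSet_le measurable_fst (hh.comp measurable_snd)
  have hlaw : μ.map (fun ω ↦ (X ω, V ω)) = (μ.map X).prod (μ.map V) :=
    (indepFun_iff_map_prod_eq_prod_map_map hX.aemeasurable hV.aemeasurable).mp hXV
  calc μ.real {ω | X ω ≤ h (V ω)}
      = (∫⁻ v, μ.map X (Set.Iic (h v)) ∂μ.map V).toReal := by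
        change (μ ((fun ω ↦ (X ω, V ω)) ⁻¹' {p | p.1 ≤ h p.2})).toReal = _
        rw [← Measure.map_apply (hX.prodMk hV) hA, hlaw, Measure.prod_apply_symm hA]
        rfl
    _ = ∫ v, cdf (μ.map X) (h v) ∂μ.map V := by
        rw [← integral_toReal (f := fun v ↦ μ.map X (Set.Iic (h v)))
          (measurable_measure_prodMk_right hA).aemeasurable
          (ae_of_all _ fun v ↦ measure_lt_top _ _)]
        simp only [cdf_eq_real, measureReal_def]
    _ = ∫ ω, cdf (μ.map X) (h (V ω)) ∂μ :=
        integral_map hV.aemeasurable ((cdf _).mono.measurable.comp hh).aestronglyMeasurable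

lemma exp_neg_mul_sum_pow_div_factorial_add_inv (N : ℕ) {η : ℝ} (hη : η ≠ 0) (s v : ℝ) :
    exp (-(s * (v + 1 / η))) * ∑ k ∈ range N, (s * (v + 1 / η)) ^ k / k ! =
      exp (-s / η) * ∑ k ∈ range N, ∑ m ∈ range (k + 1),
        s ^ k / ((k - m)! * m ! * η ^ (k - m)) * (v ^ m * exp (-s * v)) := by
  have hexp : exp (-(s * (v + 1 / η))) = exp (-s / η) * exp (-s * v) := by
    rw [← exp_add]; ring_nf
  rw [hexp, mul_assoc, mul_sum]
  congr 1
  refine sum_congr rfl fun k _ ↦ ?_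
  rw [mul_add, add_pow, sum_div, mul_sum]
  refine sum_congr rfl fun m hm ↦ ?_
  obtain ⟨j, rfl⟩ := Nat.exists_eq_add_of_le (mem_range_succ_iff.mp hm)
  rw [Nat.cast_choose ℝ (Nat.le_add_right m j), Nat.add_sub_cancel_left]
  simp only [one_div, mul_pow, inv_pow]
  field_simp
  ring

lemma pow_mul_exp_neg_le_factorial (m : ℕ) {x : ℝ} (hx : 0 ≤ x) :
    x ^ m * exp (-x) ≤ m ! := by
  rw [exp_neg, ← div_eq_mul_inv, div_le_iff₀ (exp_pos x), ← div_le_iff₀' (by positivity)]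
  exact pow_div_factorial_le_exp _ hx m

lemma integrable_pow_mul_pow_mul_exp_neg_mul {Ω : Type*} [MeasurableSpace Ω] {μ : Measure Ω}
    [IsFiniteMeasure μ] {V : Ω → ℝ} (hV : Measurable V) (hV0 : ∀ ω, 0 ≤ V ω) {m k : ℕ}
    (hmk : m ≤ k) {s : ℝ} (hs : 0 ≤ s) :
    Integrable (fun ω ↦ s ^ k * (V ω ^ m * exp (-s * V ω))) μ := by
  refine .mono' (integrable_const (m ! * s ^ (k - m))) (by fun_prop) (ae_of_all _ fun ω ↦ ?_)
  have hsV : 0 ≤ s * V ω := mul_nonneg hs (hV0 ω)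
  obtain ⟨j, rfl⟩ := Nat.exists_eq_add_of_le hmk
  calc ‖s ^ (m + j) * (V ω ^ m * exp (-s * V ω))‖
      = s ^ j * ((s * V ω) ^ m * exp (-(s * V ω))) := by
        rw [norm_of_nonneg (by have := hV0 ω; positivity)]
        ring_nf
    _ ≤ s ^ j * m ! := by gcongr; exact pow_mul_exp_neg_le_factorial m hsV
    _ = m ! * s ^ (m + j - m) := by rw [Nat.add_sub_cancel_left, mul_comm]

/-- The probabilistic core of Theorem 3.2 of the paper: the CDF of
S = X/(V + 1/η) where X ∼ Gamma(N_R, 1) is independent of the nonnegative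
random variable V (equivalently, given V = v, S has the stated Gamma-type
conditional density with rate v + 1/η). -/
theorem stmt_8 (NR : ℕ) (hNR : 1 ≤ NR) (η : ℝ) (hη : 0 < η)
    {Ω : Type*} [MeasureSpace Ω] [IsProbabilityMeasure (ℙ : Measure Ω)]
    (V Xg : Ω → ℝ) (hV : ∀ ω, 0 ≤ V ω)
    (hVmeas : Measurable V) (hXmeas : Measurable Xg)
    (hgamma : Measure.map Xg ℙ = gammaMeasure NR 1)
    (hindep : IndepFun Xg V ℙ)
    (S : Ω → ℝ) (hS : ∀ ω, S ω = Xg ω / (V ω + 1 / η))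
    (s : ℝ) (hs : 0 ≤ s) :
    (ℙ {ω | S ω ≤ s}).toReal =
      1 - Real.exp (-s / η) *
        ∑ k ∈ Finset.range NR, ∑ m ∈ Finset.range (k + 1),
          s ^ k / ((k - m).factorial * m.factorial * η ^ (k - m)) *
            ∫ ω, (V ω) ^ m * Real.exp (-s * V ω) ∂ℙ := by
  obtain ⟨n, rfl⟩ := Nat.exists_eq_add_of_le' hNR
  have hrate : ∀ ω, 0 < V ω + 1 / η := fun ω ↦ by have := hV ω; positivity
  have hevent : {ω | S ω ≤ s} = {ω | Xg ω ≤ s * (V ω + 1 / η)} := by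
    ext ω
    simp only [Set.mem_ofPred_eq, hS, div_le_iff₀ (hrate ω)]
  have hcdf : ∀ ω, cdf (Measure.map Xg ℙ) (s * (V ω + 1 / η)) = 1 - exp (-s / η) *
      ∑ k ∈ range (n + 1), ∑ m ∈ range (k + 1),
        s ^ k / ((k - m)! * m ! * η ^ (k - m)) * (V ω ^ m * exp (-s * V ω)) := fun ω ↦ by
    rw [hgamma, Nat.cast_add_one,
      cdf_gammaMeasure_natCast_succ n one_pos (mul_nonneg hs (hrate ω).le), one_mul,
      exp_neg_mul_sum_pow_div_factorial_add_inv _ hη.ne']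
  have hint : ∀ k ∈ range (n + 1), ∀ m ∈ range (k + 1),
      Integrable
        (fun ω ↦ s ^ k / ((k - m)! * m ! * η ^ (k - m)) * (V ω ^ m * exp (-s * V ω))) ℙ :=
    fun k _ m hm ↦ by
    simpa only [div_mul_eq_mul_div] using
      (integrable_pow_mul_pow_mul_exp_neg_mul hVmeas hV (mem_range_succ_iff.mp hm) hs).div_const _
  rw [← measureReal_def, hevent, measureReal_le_comp_eq_integral_cdf hXmeas hVmeas hindep
    (h := fun v ↦ s * (v + 1 / η)) (by fun_prop)]
  simp_rw [hcdf]
  rw [integral_sub (integrable_const 1)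
      ((integrable_finsetSum _ fun k hk ↦ integrable_finsetSum _ (hint k hk)).const_mul _),
    integral_const, integral_const_mul,
    integral_finsetSum _ fun k hk ↦ integrable_finsetSum _ (hint k hk)]
  simp only [probReal_univ, one_smul]
  congr 2
  refine sum_congr rfl fun k hk ↦ ?_
  rw [integral_finsetSum _ (hint k hk)]
  simp_rw [integral_const_mul]
end

section
/- Let X₁,…,X_K be i.i.d. nonnegative random variables with common CDF F, and let n ≥ 1. If K = K(η) = Θ(η^α) with 0 < α ≤ n and 1 − F(s) = e^{−s/η}·Θ((1+s)^{−n}) uniformly in s ≥ 0, then Pr{ (α/n)·log₂η − log₂log η ≤ max_{k≤K} log₂(1+X_k) ≤ (α/n)·log₂η + log₂log η } → 1 as η → ∞. -/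
open Finset Filter Real MeasureTheory

/-- Auxiliary: measure of the event under the product measure. -/
lemma aux_pi_measure (ν : Measure ℝ) [IsProbabilityMeasure ν] (K : ℕ) (A B : Set ℝ)
    (hAB : MeasurableSet (A ∩ B)) :
    ((Measure.pi fun _ : Fin K => ν) {x | (∀ k, x k ∈ A) ∧ ∃ k, x k ∉ B}).toReal
      = (ν A).toReal ^ K - (ν (A ∩ B)).toReal ^ K := by
  have hset : {x : Fin K → ℝ | (∀ k, x k ∈ A) ∧ ∃ k, x k ∉ B}
      = (Set.pi Set.univ fun _ => A) \ (Set.pi Set.univ fun _ => A ∩ B) := by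
    ext x
    simp only [Set.mem_setOf_eq, Set.mem_diff, Set.mem_pi, Set.mem_univ, forall_const,
      Set.mem_inter_iff, not_forall, not_and]
    constructor
    · rintro ⟨h1, k, hk⟩; exact ⟨h1, k, fun _ => hk⟩
    · rintro ⟨h1, k, hk⟩; exact ⟨h1, k, hk (h1 k)⟩
  have hsub : (Set.pi Set.univ fun _ : Fin K => A ∩ B) ⊆ Set.pi Set.univ fun _ => A :=
    Set.pi_mono fun i _ => Set.inter_subset_left
  rw [hset, measure_diff hsub (MeasurableSet.univ_pi fun _ => hAB).nullMeasurableSet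
    (measure_ne_top _ _), Measure.pi_pi, Measure.pi_pi]
  simp only [Finset.prod_const, Finset.card_univ, Fintype.card_fin]
  have hle : (ν (A ∩ B)) ^ K ≤ (ν A) ^ K :=
    pow_le_pow_left' (measure_mono Set.inter_subset_left) K
  have hne : (ν A) ^ K ≠ ⊤ := by
    exact ((pow_le_one' prob_le_one _).trans_lt ENNReal.one_lt_top).ne
  rw [ENNReal.toReal_sub_of_le hle hne, ENNReal.toReal_pow, ENNReal.toReal_pow]

set_option maxHeartbeats 1000000 in
/-- Auxiliary: the per-η quantitative bounds. -/
lemma aux_bounds (n : ℕ) (hn : 1 ≤ n) (α : ℝ) (hα0 : 0 < α) (hαn : α ≤ n)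
    (ν : Measure ℝ) [IsProbabilityMeasure ν] (hnn : ν (Set.Iio 0) = 0)
    (c₁ c₂ : ℝ) (hc₁ : 0 < c₁) (hc₂ : 0 < c₂)
    (η : ℝ) (hη : Real.exp 1 ≤ η) (hlog : Real.log η ≤ η ^ (α / (n : ℝ)))
    (htail : ∀ s ≥ (0 : ℝ), c₁ * Real.exp (-s / η) / (1 + s) ^ n ≤ (ν (Set.Ioi s)).toReal ∧
        (ν (Set.Ioi s)).toReal ≤ c₂ * Real.exp (-s / η) / (1 + s) ^ n)
    (Kn : ℕ) (a₁ a₂ : ℝ) (ha₁ : 0 < a₁)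
    (hK1 : a₁ * η ^ α ≤ (Kn : ℝ)) (hK2 : (Kn : ℝ) ≤ a₂ * η ^ α) :
    1 - a₂ * c₂ / (Real.log η) ^ n ≤
      (ν {y : ℝ | Real.logb 2 (1 + y) ≤
          (α / (n : ℝ)) * Real.logb 2 η + Real.logb 2 (Real.log η)}).toReal ^ Kn
    ∧ (ν ({y : ℝ | Real.logb 2 (1 + y) ≤
          (α / (n : ℝ)) * Real.logb 2 η + Real.logb 2 (Real.log η)} ∩
        {y : ℝ | Real.logb 2 (1 + y) <
          (α / (n : ℝ)) * Real.logb 2 η - Real.logb 2 (Real.log η)})).toReal ^ Kn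
        ≤ Real.exp (-(a₁ * c₁ * Real.exp (-1) * (Real.log η) ^ n)) := by
  have hnR : (0 : ℝ) < n := by exact_mod_cast Nat.lt_of_lt_of_le Nat.zero_lt_one hn
  have h12 : (1 : ℝ) < 2 := one_lt_two
  have h2pos : (0 : ℝ) < 2 := two_pos
  have h21 : (2 : ℝ) ≠ 1 := by norm_num
  have hη1 : (1 : ℝ) ≤ η := le_trans (Real.one_le_exp (by norm_num)) hη
  have hηpos : (0 : ℝ) < η := lt_of_lt_of_le one_pos hη1
  have hlog1 : (1 : ℝ) ≤ Real.log η := (Real.le_log_iff_exp_le hηpos).mpr (by simpa using hη)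
  have hlogpos : (0 : ℝ) < Real.log η := lt_of_lt_of_le one_pos hlog1
  have hlognn : (0 : ℝ) ≤ (Real.log η) ^ n := pow_nonneg hlogpos.le n
  have hrpos : (0 : ℝ) < η ^ (α / (n : ℝ)) := Real.rpow_pos_of_pos hηpos _
  have hr1 : (1 : ℝ) ≤ η ^ (α / (n : ℝ)) := by
    calc (1 : ℝ) = η ^ (0 : ℝ) := (Real.rpow_zero η).symm
    _ ≤ η ^ (α / (n : ℝ)) := Real.rpow_le_rpow_of_exponent_le hη1 (by positivity)
  have hηα : (0 : ℝ) < η ^ α := Real.rpow_pos_of_pos hηpos α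
  have hpow : ∀ x : ℝ, 0 ≤ x → (x ^ (α / (n : ℝ))) ^ n = x ^ α := by
    intro x hx
    rw [← Real.rpow_natCast (x ^ (α / (n : ℝ))) n, ← Real.rpow_mul hx,
      div_mul_cancel₀ _ hnR.ne']
  -- the restriction lemma
  have hres : ∀ S : Set ℝ, ν S = ν (S ∩ Set.Ici 0) := by
    intro S
    refine le_antisymm ?_ (measure_mono Set.inter_subset_left)
    calc ν S ≤ ν ((S ∩ Set.Ici 0) ∪ Set.Iio 0) := by
          refine measure_mono fun y hy => ?_
          by_cases h : (0 : ℝ) ≤ y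
          · exact Or.inl ⟨hy, h⟩
          · exact Or.inr (lt_of_not_ge h)
    _ ≤ ν (S ∩ Set.Ici 0) + ν (Set.Iio 0) := measure_union_le _ _
    _ = ν (S ∩ Set.Ici 0) := by rw [hnn, add_zero]
  have hcompl : ∀ a : ℝ, (ν (Set.Iic a)).toReal = 1 - (ν (Set.Ioi a)).toReal := by
    intro a
    have h := measure_add_measure_compl (μ := ν) (measurableSet_Iic (a := a))
    rw [Set.compl_Iic, measure_univ] at h
    have h2 : (ν (Set.Iic a)).toReal + (ν (Set.Ioi a)).toReal = 1 := by
      rw [← ENNReal.toReal_add (measure_ne_top _ _) (measure_ne_top _ _), h, ENNReal.toReal_one]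
    linarith
  have hle1 : ∀ S : Set ℝ, (ν S).toReal ≤ 1 := by
    intro S
    simpa using ENNReal.toReal_mono ENNReal.one_ne_top (prob_le_one (μ := ν) (s := S))
  -- exponents
  set U : ℝ := (α / (n : ℝ)) * Real.logb 2 η + Real.logb 2 (Real.log η) with hU
  set L : ℝ := (α / (n : ℝ)) * Real.logb 2 η - Real.logb 2 (Real.log η) with hL
  have h2base : (2 : ℝ) ^ ((α / (n : ℝ)) * Real.logb 2 η) = η ^ (α / (n : ℝ)) := by
    rw [mul_comm, Real.rpow_mul h2pos.le, Real.rpow_logb h2pos h21 hηpos]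
  have h2U : (2 : ℝ) ^ U = η ^ (α / (n : ℝ)) * Real.log η := by
    rw [hU, Real.rpow_add h2pos, h2base, Real.rpow_logb h2pos h21 hlogpos]
  have h2L : (2 : ℝ) ^ L = η ^ (α / (n : ℝ)) / Real.log η := by
    rw [hL, Real.rpow_sub h2pos, h2base, Real.rpow_logb h2pos h21 hlogpos]
  set u : ℝ := η ^ (α / (n : ℝ)) * Real.log η - 1 with hu
  set l : ℝ := η ^ (α / (n : ℝ)) / Real.log η - 1 with hl
  have h1u : 1 + u = η ^ (α / (n : ℝ)) * Real.log η := by rw [hu]; ring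
  have h1l : 1 + l = η ^ (α / (n : ℝ)) / Real.log η := by rw [hl]; ring
  have h1lge : (1 : ℝ) ≤ η ^ (α / (n : ℝ)) / Real.log η := (one_le_div hlogpos).mpr hlog
  set SU : Set ℝ := {y : ℝ | Real.logb 2 (1 + y) ≤ U} with hSU
  set T : Set ℝ := {y : ℝ | Real.logb 2 (1 + y) < L} with hT
  clear_value U L u l SU T
  have hu0 : (0 : ℝ) ≤ u := by nlinarith [hr1, hlog1, h1u]
  have hl0 : (0 : ℝ) ≤ l := by linarith
  -- first bound
  obtain ⟨hu1, hu2⟩ := htail u hu0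
  obtain ⟨hl1, -⟩ := htail l hl0
  have hSUsub : Set.Iic u ∩ Set.Ici 0 ⊆ SU := by
    rintro y ⟨hyu, hy0⟩
    simp only [Set.mem_Iic] at hyu
    simp only [Set.mem_Ici] at hy0
    have h1y : (0 : ℝ) < 1 + y := by linarith
    have : Real.logb 2 (1 + y) ≤ Real.logb 2 ((2 : ℝ) ^ U) :=
      Real.logb_le_logb_of_le h12 h1y (by rw [h2U]; linarith)
    simpa [hSU, Real.logb_rpow h2pos h21] using this
  have hp_low : 1 - (ν (Set.Ioi u)).toReal ≤ (ν SU).toReal := by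
    have h1 : ν (Set.Iic u) ≤ ν SU := by
      calc ν (Set.Iic u) = ν (Set.Iic u ∩ Set.Ici 0) := hres _
      _ ≤ ν SU := measure_mono hSUsub
    have h2 := ENNReal.toReal_mono (measure_ne_top _ _) h1
    rw [hcompl u] at h2
    linarith
  have hupow : (1 + u) ^ n = η ^ α * (Real.log η) ^ n := by
    rw [h1u, mul_pow, hpow η hηpos.le]
  have hupper : (ν (Set.Ioi u)).toReal ≤ c₂ / (η ^ α * (Real.log η) ^ n) := by
    refine hu2.trans ?_
    rw [hupow]
    have hexp1 : Real.exp (-u / η) ≤ 1 := Real.exp_le_one_iff.mpr (by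
      have : (0 : ℝ) ≤ u / η := div_nonneg hu0 hηpos.le
      rw [neg_div]; linarith)
    have hden : (0 : ℝ) < η ^ α * (Real.log η) ^ n := by
      exact mul_pos hηα (pow_pos hlogpos n)
    refine (div_le_div_iff_of_pos_right hden).mpr ?_
    nlinarith [Real.exp_pos (-u / η)]
  have hp1 : (ν SU).toReal ≤ 1 := hle1 _
  have hppos : (0 : ℝ) ≤ (ν SU).toReal := ENNReal.toReal_nonneg
  have hKnn : (0 : ℝ) ≤ (Kn : ℝ) := Nat.cast_nonneg _
  have hber : 1 - (Kn : ℝ) * (1 - (ν SU).toReal) ≤ (ν SU).toReal ^ Kn := by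
    have h := one_add_mul_le_pow (a := (ν SU).toReal - 1) (by nlinarith) Kn
    have h2 : 1 + ((ν SU).toReal - 1) = (ν SU).toReal := by ring
    rw [h2] at h
    nlinarith
  have h1p : 1 - (ν SU).toReal ≤ c₂ / (η ^ α * (Real.log η) ^ n) := by linarith
  have hKbound : (Kn : ℝ) * (1 - (ν SU).toReal) ≤ a₂ * c₂ / (Real.log η) ^ n := by
    have hK0 : (0 : ℝ) ≤ a₂ * η ^ α := le_trans hKnn hK2
    have h := mul_le_mul hK2 h1p (by linarith) hK0
    refine h.trans (le_of_eq ?_)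
    have hlogn0 : (Real.log η) ^ n ≠ 0 := (pow_pos hlogpos n).ne'
    field_simp
  have hfirst : 1 - a₂ * c₂ / (Real.log η) ^ n ≤ (ν SU).toReal ^ Kn := by linarith
  -- second bound
  have hlle : l ≤ η := by
    have h1 : η ^ (α / (n : ℝ)) / Real.log η ≤ η ^ (α / (n : ℝ)) := by
      apply div_le_self hrpos.le hlog1
    have h2 : η ^ (α / (n : ℝ)) ≤ η := by
      calc η ^ (α / (n : ℝ)) ≤ η ^ (1 : ℝ) :=
        Real.rpow_le_rpow_of_exponent_le hη1 (by rw [div_le_one hnR]; exact hαn)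
      _ = η := Real.rpow_one η
    linarith
  have hexp2 : Real.exp (-1) ≤ Real.exp (-l / η) := by
    apply Real.exp_le_exp.mpr
    rw [neg_div, neg_le_neg_iff]
    exact (div_le_one hηpos).mpr hlle
  have hlpow : (1 + l) ^ n = η ^ α / (Real.log η) ^ n := by
    rw [h1l, div_pow, hpow η hηpos.le]
  have htl : c₁ * Real.exp (-1) * (Real.log η) ^ n / η ^ α ≤ (ν (Set.Ioi l)).toReal := by
    refine le_trans ?_ hl1
    rw [hlpow]
    rw [div_le_div_iff₀ (by positivity) (by positivity)]
    have hexp3 : (0 : ℝ) < Real.exp (-l / η) := Real.exp_pos _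
    have : c₁ * Real.exp (-1) ≤ c₁ * Real.exp (-l / η) := by nlinarith
    calc c₁ * Real.exp (-1) * (Real.log η) ^ n * (η ^ α / (Real.log η) ^ n)
        = (c₁ * Real.exp (-1)) * η ^ α := by
          have hL0 : (Real.log η) ^ n ≠ 0 := (pow_pos hlogpos n).ne'
          field_simp
    _ ≤ (c₁ * Real.exp (-l / η)) * η ^ α := by nlinarith
    _ = c₁ * Real.exp (-l / η) * η ^ α := by ring
  have hTsub : T ∩ Set.Ici 0 ⊆ Set.Iic l := by
    rintro y ⟨hyT, hy0⟩
    simp only [hT, Set.mem_setOf_eq] at hyT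
    simp only [Set.mem_Ici] at hy0
    simp only [Set.mem_Iic]
    by_contra hyl
    push_neg at hyl
    have h1l0 : (0 : ℝ) < 1 + l := by linarith
    have : Real.logb 2 (1 + l) < Real.logb 2 (1 + y) :=
      Real.logb_lt_logb h12 h1l0 (by linarith)
    have hLeq : Real.logb 2 (1 + l) = L := by
      rw [h1l, ← h2L, Real.logb_rpow h2pos h21]
    rw [hLeq] at this
    linarith
  have hq_le : (ν (SU ∩ T)).toReal ≤ 1 - (ν (Set.Ioi l)).toReal := by
    have h1 : ν (SU ∩ T) ≤ ν (Set.Iic l) := by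
      calc ν (SU ∩ T) ≤ ν T := measure_mono Set.inter_subset_right
      _ = ν (T ∩ Set.Ici 0) := hres _
      _ ≤ ν (Set.Iic l) := measure_mono hTsub
    have h2 := ENNReal.toReal_mono (measure_ne_top _ _) h1
    rw [hcompl l] at h2
    exact h2
  have htlle1 : (ν (Set.Ioi l)).toReal ≤ 1 := hle1 _
  have htlnn : (0 : ℝ) ≤ (ν (Set.Ioi l)).toReal := ENNReal.toReal_nonneg
  have hqnn : (0 : ℝ) ≤ (ν (SU ∩ T)).toReal := ENNReal.toReal_nonneg
  have hsecond : (ν (SU ∩ T)).toReal ^ Kn ≤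
      Real.exp (-(a₁ * c₁ * Real.exp (-1) * (Real.log η) ^ n)) := by
    set t : ℝ := (ν (Set.Ioi l)).toReal with ht
    calc (ν (SU ∩ T)).toReal ^ Kn ≤ (1 - t) ^ Kn := pow_le_pow_left₀ hqnn hq_le Kn
    _ ≤ (Real.exp (-t)) ^ Kn := by
        apply pow_le_pow_left₀ (by linarith) ?_ Kn
        have := Real.add_one_le_exp (-t)
        linarith
    _ = Real.exp ((Kn : ℝ) * (-t)) := (Real.exp_nat_mul _ _).symm
    _ ≤ Real.exp (-(a₁ * c₁ * Real.exp (-1) * (Real.log η) ^ n)) := by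
        apply Real.exp_le_exp.mpr
        have hbnd : a₁ * c₁ * Real.exp (-1) * (Real.log η) ^ n ≤ (Kn : ℝ) * t := by
          have hb0 : (0 : ℝ) ≤ c₁ * Real.exp (-1) * (Real.log η) ^ n / η ^ α := by
            apply div_nonneg ?_ hηα.le
            exact mul_nonneg (mul_nonneg hc₁.le (Real.exp_pos _).le) hlognn
          have h := mul_le_mul hK1 htl hb0 (by positivity)
          calc a₁ * c₁ * Real.exp (-1) * (Real.log η) ^ n
              = (a₁ * η ^ α) * (c₁ * Real.exp (-1) * (Real.log η) ^ n / η ^ α) := by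
                field_simp
          _ ≤ (Kn : ℝ) * t := h
        linarith
  exact ⟨hfirst, hsecond⟩

set_option maxHeartbeats 1000000 in
/-- Concentration of the maximum rate over K = Θ(η^α) i.i.d. users whose SINR
tail is e^{−s/η}·Θ((1+s)^{−n}) (equations (42)–(43) in Appendix E of the
paper).  Here `μ η` is the common law of the (nonnegative) SINR at SNR η, and
the joint law of the K i.i.d. users is the product measure. -/
theorem stmt_12 (n : ℕ) (hn : 1 ≤ n) (α : ℝ) (hα0 : 0 < α) (hαn : α ≤ n)
    (μ : ℝ → Measure ℝ) (hprob : ∀ η, IsProbabilityMeasure (μ η))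
    (hnonneg : ∀ η, μ η (Set.Iio 0) = 0)
    -- uniform two-sided tail bound 1 − F(s) = e^{−s/η}·Θ((1+s)^{−n}):
    (c₁ c₂ η₀ : ℝ) (hc₁ : 0 < c₁) (hc₂ : c₁ < c₂)
    (htail : ∀ η ≥ η₀, ∀ s ≥ (0 : ℝ),
      c₁ * Real.exp (-s / η) / (1 + s) ^ n ≤ (μ η (Set.Ioi s)).toReal ∧
      (μ η (Set.Ioi s)).toReal ≤ c₂ * Real.exp (-s / η) / (1 + s) ^ n)
    -- number of users K(η) = Θ(η^α):
    (K : ℝ → ℕ) (a₁ a₂ η₁ : ℝ) (ha₁ : 0 < a₁)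
    (hK : ∀ η ≥ η₁, a₁ * η ^ α ≤ (K η : ℝ) ∧ (K η : ℝ) ≤ a₂ * η ^ α) :
    Tendsto (fun η : ℝ =>
      ((Measure.pi fun _ : Fin (K η) => μ η)
        {x | (∀ k, Real.logb 2 (1 + x k) ≤
                (α / n) * Real.logb 2 η + Real.logb 2 (Real.log η)) ∧
             ∃ k, (α / n) * Real.logb 2 η - Real.logb 2 (Real.log η) ≤
                Real.logb 2 (1 + x k)}).toReal)
      atTop (nhds 1) := by
  have hmlogb : Measurable fun y : ℝ => Real.logb 2 (1 + y) := by
    have heq : (fun y : ℝ => Real.logb 2 (1 + y))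
        = fun y : ℝ => Real.log (1 + y) / Real.log 2 := rfl
    rw [heq]
    exact (Real.measurable_log.comp (measurable_const.add measurable_id)).div_const _
  have key : ∀ η : ℝ,
      ((Measure.pi fun _ : Fin (K η) => μ η)
        {x | (∀ k, Real.logb 2 (1 + x k) ≤
                (α / n) * Real.logb 2 η + Real.logb 2 (Real.log η)) ∧
             ∃ k, (α / n) * Real.logb 2 η - Real.logb 2 (Real.log η) ≤
                Real.logb 2 (1 + x k)}).toReal
      = (μ η {y : ℝ | Real.logb 2 (1 + y) ≤
            (α / (n : ℝ)) * Real.logb 2 η + Real.logb 2 (Real.log η)}).toReal ^ K η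
        - (μ η ({y : ℝ | Real.logb 2 (1 + y) ≤
            (α / (n : ℝ)) * Real.logb 2 η + Real.logb 2 (Real.log η)} ∩
          {y : ℝ | Real.logb 2 (1 + y) <
            (α / (n : ℝ)) * Real.logb 2 η - Real.logb 2 (Real.log η)})).toReal ^ K η := by
    intro η
    haveI := hprob η
    have hA : MeasurableSet {y : ℝ | Real.logb 2 (1 + y) ≤
        (α / (n : ℝ)) * Real.logb 2 η + Real.logb 2 (Real.log η)} :=
      measurableSet_le hmlogb measurable_const
    have hB : MeasurableSet {y : ℝ | Real.logb 2 (1 + y) <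
        (α / (n : ℝ)) * Real.logb 2 η - Real.logb 2 (Real.log η)} :=
      measurableSet_lt hmlogb measurable_const
    have hset : {x : Fin (K η) → ℝ | (∀ k, Real.logb 2 (1 + x k) ≤
                (α / n) * Real.logb 2 η + Real.logb 2 (Real.log η)) ∧
             ∃ k, (α / n) * Real.logb 2 η - Real.logb 2 (Real.log η) ≤
                Real.logb 2 (1 + x k)}
        = {x : Fin (K η) → ℝ | (∀ k, x k ∈ {y : ℝ | Real.logb 2 (1 + y) ≤
            (α / (n : ℝ)) * Real.logb 2 η + Real.logb 2 (Real.log η)}) ∧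
          ∃ k, x k ∉ {y : ℝ | Real.logb 2 (1 + y) <
            (α / (n : ℝ)) * Real.logb 2 η - Real.logb 2 (Real.log η)}} := by
      ext x
      simp only [Set.mem_setOf_eq, not_lt]
    rw [hset]
    exact aux_pi_measure (μ η) (K η) _ _ (hA.inter hB)
  refine Tendsto.congr (fun η => (key η).symm) ?_
  -- limits of the bounding functions
  have hlog_t : Tendsto (fun η : ℝ => (Real.log η) ^ n) atTop atTop :=
    (tendsto_pow_atTop (by omega : n ≠ 0)).comp Real.tendsto_log_atTop
  have hA0 : Tendsto (fun η : ℝ => a₂ * c₂ / (Real.log η) ^ n) atTop (nhds 0) :=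
    tendsto_const_nhds.div_atTop hlog_t
  have hB0 : Tendsto (fun η : ℝ =>
      Real.exp (-(a₁ * c₁ * Real.exp (-1) * (Real.log η) ^ n))) atTop (nhds 0) := by
    have h1 : Tendsto (fun η : ℝ => a₁ * c₁ * Real.exp (-1) * (Real.log η) ^ n) atTop atTop :=
      hlog_t.const_mul_atTop (by positivity)
    exact Real.tendsto_exp_atBot.comp (tendsto_neg_atTop_atBot.comp h1)
  have hnR : (0 : ℝ) < n := by
    have : (0 : ℕ) < n := by omega
    exact_mod_cast this
  -- eventually log η ≤ η^(α/n)
  have hev1 : ∀ᶠ η : ℝ in atTop, Real.log η ≤ η ^ (α / (n : ℝ)) := by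
    have h := (isLittleO_log_rpow_atTop (by positivity : (0:ℝ) < α / (n : ℝ))).bound
      one_pos
    filter_upwards [h, eventually_ge_atTop (1 : ℝ)] with η hη h1
    have h2 : |Real.log η| ≤ 1 * |η ^ (α / (n : ℝ))| := by
      simpa [Real.norm_eq_abs] using hη
    calc Real.log η ≤ |Real.log η| := le_abs_self _
    _ ≤ |η ^ (α / (n : ℝ))| := by linarith
    _ = η ^ (α / (n : ℝ)) := abs_of_nonneg (Real.rpow_nonneg (by linarith) _)
  -- eventual bounds
  have hev : ∀ᶠ η : ℝ in atTop,
      (1 - a₂ * c₂ / (Real.log η) ^ n ≤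
        (μ η {y : ℝ | Real.logb 2 (1 + y) ≤
            (α / (n : ℝ)) * Real.logb 2 η + Real.logb 2 (Real.log η)}).toReal ^ K η)
      ∧ ((μ η ({y : ℝ | Real.logb 2 (1 + y) ≤
            (α / (n : ℝ)) * Real.logb 2 η + Real.logb 2 (Real.log η)} ∩
          {y : ℝ | Real.logb 2 (1 + y) <
            (α / (n : ℝ)) * Real.logb 2 η - Real.logb 2 (Real.log η)})).toReal ^ K η
          ≤ Real.exp (-(a₁ * c₁ * Real.exp (-1) * (Real.log η) ^ n))) := by
    filter_upwards [eventually_ge_atTop η₀, eventually_ge_atTop η₁,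
      eventually_ge_atTop (Real.exp 1), hev1] with η h0 h1 he hlog
    haveI := hprob η
    exact aux_bounds n hn α hα0 hαn (μ η) (hnonneg η) c₁ c₂ hc₁ (hc₁.trans hc₂) η he hlog
      (htail η h0) (K η) a₁ a₂ ha₁ (hK η h1).1 (hK η h1).2
  have Hp : Tendsto (fun η : ℝ =>
      (μ η {y : ℝ | Real.logb 2 (1 + y) ≤
          (α / (n : ℝ)) * Real.logb 2 η + Real.logb 2 (Real.log η)}).toReal ^ K η)
      atTop (nhds 1) := by
    refine tendsto_of_tendsto_of_tendsto_of_le_of_le'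
      (g := fun η : ℝ => 1 - a₂ * c₂ / (Real.log η) ^ n) (h := fun _ : ℝ => (1 : ℝ))
      ?_ tendsto_const_nhds ?_ ?_
    · simpa using tendsto_const_nhds.sub hA0
    · exact hev.mono fun η hη => hη.1
    · refine Filter.Eventually.of_forall fun η => ?_
      haveI := hprob η
      refine pow_le_one₀ ENNReal.toReal_nonneg ?_
      simpa using ENNReal.toReal_mono ENNReal.one_ne_top (prob_le_one (μ := μ η))
  have Hq : Tendsto (fun η : ℝ =>
      (μ η ({y : ℝ | Real.logb 2 (1 + y) ≤
          (α / (n : ℝ)) * Real.logb 2 η + Real.logb 2 (Real.log η)} ∩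
        {y : ℝ | Real.logb 2 (1 + y) <
          (α / (n : ℝ)) * Real.logb 2 η - Real.logb 2 (Real.log η)})).toReal ^ K η)
      atTop (nhds 0) := by
    refine tendsto_of_tendsto_of_tendsto_of_le_of_le'
      (g := fun _ : ℝ => (0 : ℝ))
      (h := fun η : ℝ => Real.exp (-(a₁ * c₁ * Real.exp (-1) * (Real.log η) ^ n)))
      tendsto_const_nhds hB0 ?_ ?_
    · exact Filter.Eventually.of_forall fun η => pow_nonneg ENNReal.toReal_nonneg _
    · exact hev.mono fun η hη => hη.2
  simpa using Hp.sub Hq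
end

section
/- For nonnegative integers M, N_R, N_T with 1 ≤ N_R, 1 ≤ M ≤ N_T, and real α ≥ 0, define d_MMSE(α, M) = αM/(M − N_R) if N_R < M and 0 ≤ α ≤ M − N_R, and d_MMSE(α, M) = M otherwise (i.e., if α > M − N_R or N_R ≥ M). Then the maximum over M ∈ {1,…,N_T} of d_MMSE(α, M) is: N_T if α > N_T − N_R; ⌊α⌋ + N_R if α ≤ N_T − N_R and {α}(⌊α⌋ + N_R + 1) ≤ N_R; and α(⌊α⌋+N_R+1)/(⌊α⌋+1) if α ≤ N_T − N_R and {α}(⌊α⌋+N_R+1) > N_R. Here ⌊α⌋ and {α} denote the integer and fractional parts of α. -/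
/-!
Write `K = ⌊α⌋₊` and `f M = d α M`. Always `f M ≤ M`, and `f M = M` once `M - N_R < α`; on the
range `M - N_R ≥ α` the value `α M / (M - N_R)` decreases in `M`. Hence, when `α ≤ N_T - N_R`,
only `M = K + N_R` (where `f M = K + N_R`) and `M = K + N_R + 1` (the first `M` with
`M - N_R > α`, where `f M = α (K + N_R + 1) / (K + 1)`) compete, and comparing the two values
is exactly the test `{α} (K + N_R + 1) ≤ N_R`.
-/

open Finset

theorem Finset.sup'_eq_of_forall_le_of_mem {ι α : Type*} [SemilatticeSup α] {s : Finset ι}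
    (H : s.Nonempty) (f : ι → α) {c : α} (hle : ∀ i ∈ s, f i ≤ c) {i : ι} (hi : i ∈ s)
    (hfi : f i = c) : s.sup' H f = c :=
  le_antisymm (Finset.sup'_le H f hle) (hfi ▸ Finset.le_sup' f hi)

theorem Int.fract_eq_sub_natFloor {a : ℝ} (ha : 0 ≤ a) : Int.fract a = a - ⌊a⌋₊ := by
  rw [← Int.self_sub_floor, ← Int.natCast_floor_eq_floor ha, Int.cast_natCast]

noncomputable def mmseDoF (NR : ℕ) (a : ℝ) (M : ℕ) : ℝ :=
  if NR < M ∧ a ≤ (M : ℝ) - NR then a * M / ((M : ℝ) - NR) else M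

namespace mmseDoF

variable {NR M : ℕ} {a : ℝ}

theorem of_sub_lt (h : (M : ℝ) - NR < a) : mmseDoF NR a M = M :=
  if_neg fun h' => h.not_ge h'.2

theorem of_le (hM : M ≤ NR) : mmseDoF NR a M = M :=
  if_neg fun h => hM.not_gt h.1

theorem of_le_sub (hM : NR < M) (h : a ≤ (M : ℝ) - NR) :
    mmseDoF NR a M = a * M / ((M : ℝ) - NR) :=
  if_pos ⟨hM, h⟩

theorem le_self : mmseDoF NR a M ≤ M := by
  unfold mmseDoF
  split_ifs with h
  · have hpos : (0 : ℝ) < (M : ℝ) - NR := sub_pos.2 (by exact_mod_cast h.1)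
    rw [div_le_iff₀ hpos, mul_comm]
    exact mul_le_mul_of_nonneg_left h.2 (Nat.cast_nonneg M)
  · exact le_rfl

/-- Beyond the threshold `M - N_R ≥ a` the value `a M / (M - N_R)` decreases in `M`. -/
theorem le_of_le (ha : 0 ≤ a) {N : ℕ} (hN : NR < N) (h : a ≤ (N : ℝ) - NR) (hNM : N ≤ M) :
    mmseDoF NR a M ≤ a * N / ((N : ℝ) - NR) := by
  have hNM' : (N : ℝ) ≤ M := by exact_mod_cast hNM
  have hN' : (0 : ℝ) < (N : ℝ) - NR := sub_pos.2 (by exact_mod_cast hN)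
  rw [of_le_sub (hN.trans_le hNM) (by linarith), div_le_div_iff₀ (by linarith) hN']
  have hNR : (0 : ℝ) ≤ NR := Nat.cast_nonneg NR
  nlinarith [mul_nonneg (mul_nonneg ha hNR) (sub_nonneg.2 hNM')]

theorem le_max_floor (ha : 0 ≤ a) (M : ℕ) :
    mmseDoF NR a M ≤
      max ((⌊a⌋₊ : ℝ) + NR) (a * ((⌊a⌋₊ : ℝ) + NR + 1) / ((⌊a⌋₊ : ℝ) + 1)) := by
  rcases le_or_gt M (⌊a⌋₊ + NR) with hM | hM
  · exact le_max_of_le_left <| le_self.trans (by exact_mod_cast hM)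
  · refine le_max_of_le_right ?_
    have hlt : a < (⌊a⌋₊ : ℝ) + 1 := Nat.lt_floor_add_one a
    have := le_of_le (NR := NR) (N := ⌊a⌋₊ + NR + 1) ha (by omega) (by push_cast; linarith) hM
    push_cast at this
    rwa [show (⌊a⌋₊ : ℝ) + NR + 1 - NR = ⌊a⌋₊ + 1 by ring] at this

theorem floor_add (ha : 0 ≤ a) : mmseDoF NR a (⌊a⌋₊ + NR) = (⌊a⌋₊ : ℝ) + NR := by
  set K := ⌊a⌋₊
  rcases Nat.eq_zero_or_pos K with h0 | hpos
  · rw [of_le (by omega), h0]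
    push_cast; rfl
  rcases (Nat.floor_le ha).lt_or_eq with hlt | heq
  · rw [of_sub_lt (by push_cast; linarith)]
    push_cast; rfl
  · have hK : (0 : ℝ) < K := by exact_mod_cast hpos
    rw [of_le_sub (by omega) (by push_cast; linarith)]
    push_cast
    rw [← heq, add_sub_cancel_right, mul_div_cancel_left₀ _ hK.ne']

theorem floor_add_add_one :
    mmseDoF NR a (⌊a⌋₊ + NR + 1) = a * ((⌊a⌋₊ : ℝ) + NR + 1) / ((⌊a⌋₊ : ℝ) + 1) := by
  have hlt : a < (⌊a⌋₊ : ℝ) + 1 := Nat.lt_floor_add_one a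
  rw [of_le_sub (by omega) (by push_cast; linarith)]
  push_cast
  ring_nf

theorem div_floor_le_iff (ha : 0 ≤ a) :
    a * ((⌊a⌋₊ : ℝ) + NR + 1) / ((⌊a⌋₊ : ℝ) + 1) ≤ (⌊a⌋₊ : ℝ) + NR ↔
      Int.fract a * ((⌊a⌋₊ : ℝ) + NR + 1) ≤ NR := by
  rw [div_le_iff₀ (by positivity), Int.fract_eq_sub_natFloor ha]
  constructor <;> intro h <;> nlinarith

end mmseDoF

theorem stmt_14_general (NT NR : ℕ) (hNT : 1 ≤ NT) (hNR : 1 ≤ NR)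
    (α : ℝ) (hα : 0 ≤ α)
    (d : ℝ → ℕ → ℝ)
    (hd : ∀ (a : ℝ) (M : ℕ), d a M =
      if NR < M ∧ a ≤ (M : ℝ) - NR then a * M / ((M : ℝ) - NR) else M) :
    (Finset.Icc 1 NT).sup' (Finset.nonempty_Icc.2 hNT) (fun M => d α M) =
      if (NT : ℝ) - NR < α then (NT : ℝ)
      else if Int.fract α * ((⌊α⌋₊ : ℝ) + NR + 1) ≤ NR then (⌊α⌋₊ : ℝ) + NR
      else α * ((⌊α⌋₊ : ℝ) + NR + 1) / ((⌊α⌋₊ : ℝ) + 1) := by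
  have hdα : (fun M => d α M) = mmseDoF NR α := funext (hd α)
  rw [hdα]
  have hK : (⌊α⌋₊ : ℝ) ≤ α := Nat.floor_le hα
  split_ifs with hlarge hfract
  · exact sup'_eq_of_forall_le_of_mem _ _
      (fun M hM => mmseDoF.le_self.trans (by exact_mod_cast (mem_Icc.1 hM).2))
      (mem_Icc.2 ⟨hNT, le_rfl⟩) (mmseDoF.of_sub_lt hlarge)
  · refine sup'_eq_of_forall_le_of_mem _ _
      (fun M _ => (mmseDoF.le_max_floor hα M).trans_eq
        (max_eq_left ((mmseDoF.div_floor_le_iff hα).2 hfract)))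
      (mem_Icc.2 ⟨by omega, ?_⟩) (mmseDoF.floor_add hα)
    have : (⌊α⌋₊ : ℝ) + NR ≤ NT := by linarith
    exact_mod_cast this
  · refine sup'_eq_of_forall_le_of_mem _ _
      (fun M _ => (mmseDoF.le_max_floor hα M).trans_eq
        (max_eq_right (le_of_not_ge (mt (mmseDoF.div_floor_le_iff hα).1 hfract))))
      (mem_Icc.2 ⟨by omega, ?_⟩) mmseDoF.floor_add_add_one
    have hfract_pos : 0 < Int.fract α :=
      pos_of_mul_pos_left ((Nat.cast_nonneg NR).trans_lt (not_le.1 hfract)) (by positivity)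
    rw [Int.fract_eq_sub_natFloor hα] at hfract_pos
    have : (⌊α⌋₊ : ℝ) + NR < NT := by linarith
    have : ⌊α⌋₊ + NR < NT := by exact_mod_cast this
    omega

/-- Theorem 4.1 (RBF-MMSE part): the maximum single-cell DoF over the number of
transmit beams M ∈ {1,…,N_T}. -/
theorem stmt_14 (NT NR : ℕ) (hNT : 1 ≤ NT) (hNR : 1 ≤ NR) (hNRT : NR ≤ NT)
    (α : ℝ) (hα : 0 ≤ α)
    (d : ℝ → ℕ → ℝ)
    (hd : ∀ (a : ℝ) (M : ℕ), d a M =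
      if NR < M ∧ a ≤ (M : ℝ) - NR then a * M / ((M : ℝ) - NR) else M) :
    (Finset.Icc 1 NT).sup' (Finset.nonempty_Icc.2 hNT) (fun M => d α M) =
      if (NT : ℝ) - NR < α then (NT : ℝ)
      else if Int.fract α * ((⌊α⌋₊ : ℝ) + NR + 1) ≤ NR then (⌊α⌋₊ : ℝ) + NR
      else α * ((⌊α⌋₊ : ℝ) + NR + 1) / ((⌊α⌋₊ : ℝ) + 1) :=
  stmt_14_general NT NR hNT hNR α hα d hd
end

section
/- For integers N_T ≥ 1 and real α ≥ 0, define d(α, M) = αM/(M−1) for M ≥ 2 and 0 ≤ α ≤ M−1, and d(α, M) = M if α > M−1 (with d(α,1) = 1 for all α ≥ 0). Then max_{1 ≤ M ≤ N_T} d(α, M) equals: N_T if α > N_T − 1; ⌊α⌋ + 1 if α ≤ N_T − 1 and {α}(⌊α⌋ + 2) ≤ 1; and α(⌊α⌋+2)/(⌊α⌋+1) if α ≤ N_T − 1 and {α}(⌊α⌋+2) > 1. -/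
/-!
Below `M = α + 1` the DoF `d(α, M) = M` grows, above it `d(α, M) = α M / (M - 1)` decreases,
so with `k = ⌊α⌋` the maximum over `M ≤ N_T` is `N_T` when every `M` lies below `α + 1`, and
otherwise the larger of the two values at the crossover, `d(α, k + 1) = k + 1` and
`d(α, k + 2) = α (k + 2) / (k + 1)`. Writing `α = k + {α}`, the second exceeds the first exactly
when `{α} (k + 2) > 1`.
-/

open Finset

noncomputable def rbfDoF (a : ℝ) (M : ℕ) : ℝ :=
  if 2 ≤ M ∧ a ≤ (M : ℝ) - 1 then a * M / ((M : ℝ) - 1) else M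

theorem antitoneOn_div_sub_one : AntitoneOn (fun x : ℝ => x / (x - 1)) (Set.Ioi 1) := by
  intro x (hx : 1 < x) y (hy : 1 < y) hxy
  rw [div_le_div_iff₀ (by linarith) (by linarith)]
  linarith

theorem rbfDoF_le_natCast (a : ℝ) (M : ℕ) : rbfDoF a M ≤ M := by
  unfold rbfDoF
  split_ifs with h
  · have hM : (0 : ℝ) < M - 1 := by linarith [show (2 : ℝ) ≤ M by exact_mod_cast h.1]
    rw [div_le_iff₀ hM]
    nlinarith [h.2]
  · rfl

theorem rbfDoF_of_sub_one_lt {a : ℝ} {M : ℕ} (h : (M : ℝ) - 1 < a) : rbfDoF a M = M :=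
  if_neg fun hc => (lt_irrefl a) (h.trans_le' hc.2)

theorem rbfDoF_floor_add_one {a : ℝ} (ha : 0 ≤ a) : rbfDoF a (⌊a⌋₊ + 1) = ⌊a⌋₊ + 1 := by
  have hk := Nat.floor_le ha
  set k := ⌊a⌋₊
  unfold rbfDoF
  split_ifs with h
  · have hk0 : (k : ℝ) ≠ 0 := by exact_mod_cast (show k ≠ 0 by omega)
    have ha' : a = k := le_antisymm (by push_cast at h; linarith) hk
    rw [ha']
    push_cast
    rw [add_sub_cancel_right, mul_div_cancel_left₀ _ hk0]
  · push_cast; rfl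

theorem rbfDoF_floor_add_two (a : ℝ) :
    rbfDoF a (⌊a⌋₊ + 2) = a * (⌊a⌋₊ + 2) / (⌊a⌋₊ + 1) := by
  rw [rbfDoF, if_pos ⟨by omega, by push_cast; linarith [Nat.lt_floor_add_one a]⟩]
  push_cast
  ring_nf

theorem rbfDoF_antitone {a : ℝ} (ha : 0 ≤ a) {M M' : ℕ} (hM : 2 ≤ M) (haM : a ≤ (M : ℝ) - 1)
    (hMM' : M ≤ M') : rbfDoF a M' ≤ rbfDoF a M := by
  have hMM'_real : (M : ℝ) ≤ M' := by exact_mod_cast hMM'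
  have hM_real : (2 : ℝ) ≤ M := by exact_mod_cast hM
  rw [rbfDoF, rbfDoF, if_pos ⟨hM.trans hMM', by linarith⟩, if_pos ⟨hM, haM⟩,
    mul_div_assoc, mul_div_assoc]
  exact mul_le_mul_of_nonneg_left
    (antitoneOn_div_sub_one (by simp only [Set.mem_Ioi]; linarith)
      (by simp only [Set.mem_Ioi]; linarith) hMM'_real) ha

theorem rbfDoF_le_max {a : ℝ} (ha : 0 ≤ a) (M : ℕ) :
    rbfDoF a M ≤ max ((⌊a⌋₊ : ℝ) + 1) (a * (⌊a⌋₊ + 2) / (⌊a⌋₊ + 1)) := by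
  rcases Nat.lt_or_ge (⌊a⌋₊ + 1) M with hM | hM
  · rw [← rbfDoF_floor_add_two]
    exact le_max_of_le_right (rbfDoF_antitone ha (by omega)
      (by push_cast; linarith [Nat.lt_floor_add_one a]) hM)
  · exact le_max_of_le_left ((rbfDoF_le_natCast a M).trans (by exact_mod_cast hM))

theorem mul_floor_add_two_div_le_iff_fract {a : ℝ} (ha : 0 ≤ a) :
    a * (⌊a⌋₊ + 2) / (⌊a⌋₊ + 1) ≤ (⌊a⌋₊ : ℝ) + 1 ↔ Int.fract a * (⌊a⌋₊ + 2) ≤ 1 := by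
  have hfract : Int.fract a = a - ⌊a⌋₊ := by
    rw [← Int.self_sub_floor, natCast_floor_eq_intCast_floor ha]
  rw [hfract, div_le_iff₀ (by positivity)]
  constructor <;> intro h <;> nlinarith

theorem sup'_rbfDoF_of_le {N : ℕ} (hN : 1 ≤ N) {a : ℝ} (ha : 0 ≤ a) (haN : a ≤ (N : ℝ) - 1) :
    (Icc 1 N).sup' (nonempty_Icc.2 hN) (rbfDoF a) =
      max ((⌊a⌋₊ : ℝ) + 1) (a * (⌊a⌋₊ + 2) / (⌊a⌋₊ + 1)) := by
  have hk := Nat.floor_le ha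
  have hk1 : (⌊a⌋₊ : ℝ) + 1 ≤ (Icc 1 N).sup' (nonempty_Icc.2 hN) (rbfDoF a) := by
    have hkN : ⌊a⌋₊ + 1 ≤ N := by
      have : (⌊a⌋₊ : ℝ) + 1 ≤ N := by linarith
      exact_mod_cast this
    rw [← rbfDoF_floor_add_one ha]
    exact le_sup' (rbfDoF a) (mem_Icc.2 ⟨by omega, hkN⟩)
  refine le_antisymm (sup'_le _ _ fun M _ => rbfDoF_le_max ha M) (max_le hk1 ?_)
  by_cases hle : a * (⌊a⌋₊ + 2) / (⌊a⌋₊ + 1) ≤ (⌊a⌋₊ : ℝ) + 1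
  · exact hle.trans hk1
  · -- exceeding `⌊a⌋₊ + 1` forces `⌊a⌋₊ < a ≤ N - 1`, so `⌊a⌋₊ + 2` is an admissible `M`
    have hlt : (⌊a⌋₊ : ℝ) < a := by
      rw [not_le, lt_div_iff₀ (by positivity)] at hle
      nlinarith
    have hkN : ⌊a⌋₊ + 2 ≤ N := by
      have : (⌊a⌋₊ : ℝ) + 1 < N := by linarith
      exact_mod_cast this
    rw [← rbfDoF_floor_add_two]
    exact le_sup' (rbfDoF a) (mem_Icc.2 ⟨by omega, hkN⟩)

/-- Theorem 4.1 (RBF-MF/AS part): the maximum single-cell DoF over the number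
of transmit beams M ∈ {1,…,N_T}. -/
theorem stmt_15 (NT : ℕ) (hNT : 1 ≤ NT) (α : ℝ) (hα : 0 ≤ α)
    (d : ℝ → ℕ → ℝ)
    (hd : ∀ (a : ℝ) (M : ℕ), d a M =
      if 2 ≤ M ∧ a ≤ (M : ℝ) - 1 then a * M / ((M : ℝ) - 1) else M) :
    (Finset.Icc 1 NT).sup' (Finset.nonempty_Icc.2 hNT) (fun M => d α M) =
      if (NT : ℝ) - 1 < α then (NT : ℝ)
      else if Int.fract α * ((⌊α⌋₊ : ℝ) + 2) ≤ 1 then (⌊α⌋₊ : ℝ) + 1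
      else α * ((⌊α⌋₊ : ℝ) + 2) / ((⌊α⌋₊ : ℝ) + 1) := by
  obtain rfl : d = rbfDoF := funext₂ hd
  split_ifs with hlarge hfract
  · refine le_antisymm (sup'_le _ _ fun M hM => ?_) ?_
    · exact (rbfDoF_le_natCast α M).trans (by exact_mod_cast (mem_Icc.1 hM).2)
    · rw [← rbfDoF_of_sub_one_lt hlarge]
      exact le_sup' (rbfDoF α) (right_mem_Icc.2 hNT)
  · rw [sup'_rbfDoF_of_le hNT hα (not_lt.1 hlarge)]
    exact max_eq_left ((mul_floor_add_two_div_le_iff_fract hα).2 hfract)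
  · rw [sup'_rbfDoF_of_le hNT hα (not_lt.1 hlarge)]
    exact max_eq_right (not_le.1 (mt (mul_floor_add_two_div_le_iff_fract hα).1 hfract)).le
end

section
/- For every real α ≥ 0 and integers N_T ≥ N_R ≥ 1, the single-cell maximum DoF functions of Theorem 4.1 satisfy d*_MMSE(α) ≥ d*_MF/AS(α), with equality if and only if N_R = 1 or α ≥ N_T − 1. Moreover d*_MMSE(α) = N_T if and only if α ≥ N_T − N_R, and d*_MF/AS(α) = N_T if and only if α ≥ N_T − 1. -/
/-!
Both receivers have DoF curves of the form `dof K α M`, with `K = N_R` for MMSE and `K = 1` for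
MF/AS, and `dof K α M ≤ M` with equality exactly when `α ≥ M - K`; the maximum over
`M ∈ [1, N_T]` therefore equals `N_T` exactly when `α ≥ N_T - K`. Increasing `K` can only
increase `dof K α M`, which gives the inequality. For strictness when `N_R ≥ 2` and
`α < N_T - 1`, every positive value `dof 1 α M` is beaten by
`dof 2 α (M + 1) ≤ dof N_R α (M + 1)` when `M < N_T`, and by `dof N_R α N_T` when `M = N_T`.
-/

open Finset

/-- `dof N_R` is the paper's `d_MMSE(α, M)` and `dof 1` is `d_MF(α, M)`. -/
noncomputable def dof (K : ℕ) (a : ℝ) (M : ℕ) : ℝ :=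
  if K < M ∧ a ≤ (M : ℝ) - K then a * M / ((M : ℝ) - K) else M

section Dof

variable {K K' M : ℕ} {a : ℝ}

lemma dof_of_lt_of_le (hKM : K < M) (ha : a ≤ (M : ℝ) - K) :
    dof K a M = a * M / ((M : ℝ) - K) :=
  if_pos ⟨hKM, ha⟩

lemma dof_of_not (h : ¬(K < M ∧ a ≤ (M : ℝ) - K)) : dof K a M = M :=
  if_neg h

lemma dof_le_self : dof K a M ≤ M := by
  unfold dof
  split_ifs with h
  · obtain ⟨hKM, haM⟩ := h
    have hd : (0 : ℝ) < M - K := sub_pos.2 (by exact_mod_cast hKM)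
    rw [div_le_iff₀ hd]
    nlinarith [mul_nonneg (Nat.cast_nonneg (α := ℝ) M) (sub_nonneg.2 haM)]
  · exact le_rfl

lemma dof_eq_self_iff (hKM : K ≤ M) (ha : 0 ≤ a) : dof K a M = M ↔ (M : ℝ) - K ≤ a := by
  by_cases hr : K < M ∧ a ≤ (M : ℝ) - K
  · have hM : (M : ℝ) ≠ 0 := Nat.cast_ne_zero.2 (by omega)
    have hd : (M : ℝ) - K ≠ 0 := (sub_pos.2 (by exact_mod_cast hr.1)).ne'
    rw [dof_of_lt_of_le hr.1 hr.2, div_eq_iff hd, mul_comm (M : ℝ), mul_left_inj' hM]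
    exact ⟨fun h => h.ge, fun h => le_antisymm hr.2 h⟩
  · refine iff_of_true (dof_of_not hr) ?_
    rcases hKM.lt_or_eq with hKM | rfl
    · exact (lt_of_not_ge fun h => hr ⟨hKM, h⟩).le
    · simpa using ha

lemma dof_mono (hK : K ≤ K') (ha : 0 ≤ a) : dof K a M ≤ dof K' a M := by
  by_cases hr : K' < M ∧ a ≤ (M : ℝ) - K'
  · have hKK' : (K : ℝ) ≤ K' := by exact_mod_cast hK
    have hK'M : (K' : ℝ) < M := by exact_mod_cast hr.1
    rw [dof_of_lt_of_le (hK.trans_lt hr.1) (by linarith [hr.2]), dof_of_lt_of_le hr.1 hr.2]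
    exact div_le_div_of_nonneg_left (by positivity) (by linarith) (by linarith)
  · exact (dof_of_not hr).symm ▸ dof_le_self

lemma dof_lt_dof_of_lt (hK : K < K') (ha : 0 < a) (haM : a < (M : ℝ) - K) :
    dof K a M < dof K' a M := by
  have hKM : (K : ℝ) < M := by linarith
  have hM : (0 : ℝ) < M := (Nat.cast_nonneg K).trans_lt hKM
  rw [dof_of_lt_of_le (by exact_mod_cast hKM) haM.le]
  by_cases hr : K' < M ∧ a ≤ (M : ℝ) - K'
  · have hKK' : (K : ℝ) < K' := by exact_mod_cast hK
    have hK'M : (K' : ℝ) < M := by exact_mod_cast hr.1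
    rw [dof_of_lt_of_le hr.1 hr.2]
    exact div_lt_div_of_pos_left (by positivity) (by linarith) (by linarith)
  · rw [dof_of_not hr, div_lt_iff₀ (by linarith)]
    nlinarith

lemma dof_lt_dof_succ_succ (h : 0 < dof K a M) : dof K a M < dof (K + 1) a (M + 1) := by
  have hshift : ((M + 1 : ℕ) : ℝ) - ((K + 1 : ℕ) : ℝ) = M - K := by push_cast; ring
  by_cases hr : K < M ∧ a ≤ (M : ℝ) - K
  · rw [dof_of_lt_of_le hr.1 hr.2] at h ⊢
    have hd : (0 : ℝ) < M - K := sub_pos.2 (by exact_mod_cast hr.1)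
    have haM : 0 < a * M := (div_pos_iff_of_pos_right hd).1 h
    have ha : 0 < a := by nlinarith [Nat.cast_nonneg (α := ℝ) M]
    rw [dof_of_lt_of_le (by omega) (by rw [hshift]; exact hr.2), hshift]
    gcongr
    linarith
  · have hr' : ¬(K + 1 < M + 1 ∧ a ≤ ((M + 1 : ℕ) : ℝ) - ((K + 1 : ℕ) : ℝ)) := by
      rw [hshift]
      exact fun h => hr ⟨by omega, h.2⟩
    rw [dof_of_not hr, dof_of_not hr']
    push_cast
    linarith

end Dof

lemma sup'_Icc_eq_right_iff {N : ℕ} {f : ℕ → ℝ} (hf : ∀ M, f M ≤ M)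
    (hN : (Icc 1 N).Nonempty) : (Icc 1 N).sup' hN f = N ↔ f N = N := by
  constructor
  · intro h
    obtain ⟨M, hM, hfM⟩ := exists_mem_eq_sup' hN f
    have hMN : (M : ℝ) ≤ N := by exact_mod_cast (mem_Icc.1 hM).2
    have hNM : (N : ℝ) ≤ M := h ▸ hfM ▸ hf M
    have hMN' : M = N := by exact_mod_cast le_antisymm hMN hNM
    rw [← hMN', ← hfM, h, hMN']
  · intro h
    refine le_antisymm (sup'_le _ _ fun M hM => (hf M).trans ?_) (h ▸ le_sup' f ?_)
    · exact_mod_cast (mem_Icc.1 hM).2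
    · exact right_mem_Icc.2 (nonempty_Icc.1 hN)

section MaxDof

variable {K K' N : ℕ} {a : ℝ}

lemma sup'_dof_eq_iff (hKN : K ≤ N) (ha : 0 ≤ a) (hN : (Icc 1 N).Nonempty) :
    (Icc 1 N).sup' hN (dof K a) = N ↔ (N : ℝ) - K ≤ a :=
  (sup'_Icc_eq_right_iff (fun _ => dof_le_self) hN).trans (dof_eq_self_iff hKN ha)

lemma sup'_dof_lt_sup'_dof (hK : K < K') (ha : 0 ≤ a) (haN : a < (N : ℝ) - K)
    (hN : (Icc 1 N).Nonempty) :
    (Icc 1 N).sup' hN (dof K a) < (Icc 1 N).sup' hN (dof K' a) := by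
  refine (sup'_lt_iff hN).2 fun M hM => ?_
  obtain ⟨hM1, hMN⟩ := mem_Icc.1 hM
  rcases le_or_gt (dof K a M) 0 with hpos | hpos
  · have hone : dof K' a 1 = 1 := by
      rw [dof_of_not (by rintro ⟨h, -⟩; omega), Nat.cast_one]
    calc dof K a M < dof K' a 1 := by rw [hone]; linarith
      _ ≤ _ := le_sup' _ (left_mem_Icc.2 (nonempty_Icc.1 hN))
  rcases hMN.lt_or_eq with hMN | rfl
  · calc dof K a M < dof (K + 1) a (M + 1) := dof_lt_dof_succ_succ hpos
      _ ≤ dof K' a (M + 1) := dof_mono hK ha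
      _ ≤ _ := le_sup' _ (mem_Icc.2 ⟨by omega, hMN⟩)
  · have ha' : 0 < a := by
      refine ha.lt_of_ne fun h => ?_
      have hKM : K < M := by exact_mod_cast (show (K : ℝ) < M by linarith)
      rw [dof_of_lt_of_le hKM haN.le, ← h, zero_mul, zero_div] at hpos
      exact hpos.false
    exact (dof_lt_dof_of_lt hK ha' haN).trans_le (le_sup' _ hM)

end MaxDof

/-- The DoF gain of the MMSE receiver over MF/AS receivers (Theorem 4.1 and
Proposition 4.2 of the paper). -/
theorem stmt_16 (NT NR : ℕ) (hNR : 1 ≤ NR) (hNRT : NR ≤ NT)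
    (α : ℝ) (hα : 0 ≤ α)
    (dMMSE dMF : ℝ → ℕ → ℝ)
    (hdMMSE : ∀ (a : ℝ) (M : ℕ), dMMSE a M =
      if NR < M ∧ a ≤ (M : ℝ) - NR then a * M / ((M : ℝ) - NR) else M)
    (hdMF : ∀ (a : ℝ) (M : ℕ), dMF a M =
      if 2 ≤ M ∧ a ≤ (M : ℝ) - 1 then a * M / ((M : ℝ) - 1) else M)
    (dsMMSE dsMF : ℝ)
    (hsMMSE : dsMMSE = (Finset.Icc 1 NT).sup'
      (Finset.nonempty_Icc.2 (le_trans hNR hNRT)) (fun M => dMMSE α M))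
    (hsMF : dsMF = (Finset.Icc 1 NT).sup'
      (Finset.nonempty_Icc.2 (le_trans hNR hNRT)) (fun M => dMF α M)) :
    dsMF ≤ dsMMSE ∧
    (dsMMSE = dsMF ↔ (NR = 1 ∨ (NT : ℝ) - 1 ≤ α)) ∧
    (dsMMSE = (NT : ℝ) ↔ (NT : ℝ) - NR ≤ α) ∧
    (dsMF = (NT : ℝ) ↔ (NT : ℝ) - 1 ≤ α) := by
  have hMMSE : dMMSE = dof NR := funext₂ hdMMSE
  have hMF : dMF = dof 1 := funext₂ fun a M => by rw [hdMF, dof, Nat.cast_one]; rfl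
  subst hMMSE hMF hsMMSE hsMF
  have hMMSE_top := sup'_dof_eq_iff hNRT hα (nonempty_Icc.2 (hNR.trans hNRT))
  have hMF_top := sup'_dof_eq_iff (K := 1) (hNR.trans hNRT) hα (nonempty_Icc.2 (hNR.trans hNRT))
  rw [Nat.cast_one] at hMF_top
  refine ⟨sup'_mono_fun fun M _ => dof_mono hNR hα, ⟨fun h => ?_, ?_⟩, hMMSE_top, hMF_top⟩
  · refine or_iff_not_imp_left.2 fun hNR1 => le_of_not_gt fun hαlt => ?_
    have hlt := sup'_dof_lt_sup'_dof (K := 1) (K' := NR) (by omega) hα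
      (by rwa [Nat.cast_one]) (nonempty_Icc.2 (hNR.trans hNRT))
    exact hlt.ne' h
  · rintro (rfl | h)
    · rfl
    · rw [hMMSE_top.2 (by linarith [(Nat.one_le_cast (α := ℝ)).2 hNR]), hMF_top.2 h]
end

section
/- Let H₁,…,H_K be i.i.d. random N_R × N_T complex matrices with i.i.d. CN(0,1) entries, and let η = η(K) satisfy K = Θ(η^α) for some α ≥ 0. Then Pr{ max_{1≤k≤K} log₂(1 + η·Tr(H_k^H H_k)) ≤ log₂η + log₂log η + log₂(α+1) } → 1 as η → ∞. -/
/-!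
Tr(HₖᴴHₖ) is the sum of the squares of 2·N_R·N_T independent N(0, 1/2) coordinates, so the
Chernoff bound with a parameter s < 1 bounds its tail beyond t by e^{-st} Mⁿ, where
M = E[e^{sX²}] is finite. If log₂(1 + η Tr) exceeds log₂(η · log η · (α + 1)), then
Tr ≥ (α + 1) log η - 1; with s = (α + 1/2)/(α + 1) the failure probability of each user is
O(η^{-(α+1/2)}), and a union bound over K = O(η^α) users leaves O(η^{-1/2}) → 0.
-/

open Finset Filter Real MeasureTheory ProbabilityTheory Matrix
open scoped NNReal Topology

lemma gaussianPDFReal_zero_mul_exp_mul_sq (v : ℝ≥0) (s x : ℝ) :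
    gaussianPDFReal 0 v x * exp (s * x ^ 2) =
      (√(2 * π * v))⁻¹ * exp (-((2 * (v : ℝ))⁻¹ - s) * x ^ 2) := by
  rw [gaussianPDFReal, mul_assoc, ← exp_add]
  congr 2
  ring

lemma integrable_exp_mul_sq_gaussianReal {v : ℝ≥0} (hv : v ≠ 0) {s : ℝ} (hs : 2 * v * s < 1) :
    Integrable (fun x ↦ exp (s * x ^ 2)) (gaussianReal 0 v) := by
  have hb : 0 < (2 * (v : ℝ))⁻¹ - s := by
    rw [sub_pos, ← one_div, lt_div_iff₀ (by positivity)]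
    linarith
  rw [gaussianReal_of_var_ne_zero 0 hv, integrable_withDensity_iff_integrable_smul'
    (measurable_gaussianPDF 0 v) (ae_of_all _ fun _ ↦ gaussianPDF_lt_top)]
  simp_rw [toReal_gaussianPDF, smul_eq_mul, gaussianPDFReal_zero_mul_exp_mul_sq]
  exact (integrable_exp_neg_mul_sq hb).const_mul _

lemma measureReal_pi_gaussianReal_sum_sq_ge_le {ι : Type*} [Fintype ι] {v : ℝ≥0} (hv : v ≠ 0)
    {s : ℝ} (hs₀ : 0 ≤ s) (hs : 2 * v * s < 1) (t : ℝ) :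
    (Measure.pi fun _ : ι ↦ gaussianReal 0 v).real {x | t ≤ ∑ i, x i ^ 2} ≤
      exp (-s * t) * (∫ x, exp (s * x ^ 2) ∂gaussianReal 0 v) ^ Fintype.card ι := by
  have hprod : (fun x : ι → ℝ ↦ exp (s * ∑ i, x i ^ 2)) = fun x ↦ ∏ i, exp (s * x i ^ 2) := by
    ext x
    rw [mul_sum, exp_sum]
  have hint : Integrable (fun x : ι → ℝ ↦ exp (s * ∑ i, x i ^ 2))
      (Measure.pi fun _ ↦ gaussianReal 0 v) := by
    rw [hprod]
    exact Integrable.fintype_prod fun _ ↦ integrable_exp_mul_sq_gaussianReal hv hs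
  have hmgf : mgf (fun x : ι → ℝ ↦ ∑ i, x i ^ 2) (Measure.pi fun _ ↦ gaussianReal 0 v) s =
      (∫ x, exp (s * x ^ 2) ∂gaussianReal 0 v) ^ Fintype.card ι := by
    rw [mgf, hprod]
    exact integral_fintype_prod_eq_pow fun x ↦ exp (s * x ^ 2)
  simpa only [hmgf] using measure_ge_le_exp_mul_mgf t hs₀ hint

lemma measureReal_sum_sq_ge_le_of_iIndepFun {Ω ι : Type*} [MeasurableSpace Ω] {P : Measure Ω}
    [Fintype ι] {X : ι → Ω → ℝ} {v : ℝ≥0} (hv : v ≠ 0) (hX : ∀ i, P.map (X i) = gaussianReal 0 v)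
    (hindep : iIndepFun X P) {s : ℝ} (hs₀ : 0 ≤ s) (hs : 2 * v * s < 1) (t : ℝ) :
    P.real {ω | t ≤ ∑ i, X i ω ^ 2} ≤
      exp (-s * t) * (∫ x, exp (s * x ^ 2) ∂gaussianReal 0 v) ^ Fintype.card ι := by
  have hlaw : ∀ i, HasLaw (X i) (gaussianReal 0 v) P := fun i ↦
    ⟨.of_map_ne_zero (by rw [hX i]; exact IsProbabilityMeasure.ne_zero _), hX i⟩
  rw [(hindep.hasLaw_pi hlaw).measureReal_eq (p := fun x ↦ t ≤ ∑ i, x i ^ 2)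
    (measurableSet_le measurable_const (by fun_prop))]
  exact measureReal_pi_gaussianReal_sum_sq_ge_le hv hs₀ hs t

lemma Matrix.re_trace_conjTranspose_mul_self {m n : Type*} [Fintype m] [Fintype n]
    (A : Matrix m n ℂ) : (trace (Aᴴ * A)).re = ∑ i, ∑ j, ((A i j).re ^ 2 + (A i j).im ^ 2) := by
  simp only [trace, diag_apply, mul_apply, conjTranspose_apply, Complex.re_sum, Complex.mul_re,
    RCLike.star_def, Complex.conj_re, Complex.conj_im]
  rw [Finset.sum_comm]
  congr! 2
  ring

lemma measureReal_re_trace_conjTranspose_mul_self_ge_le {Ω m n : Type*} [MeasurableSpace Ω]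
    {P : Measure Ω} [Fintype m] [Fintype n] {G : Ω → Matrix m n ℂ} {X : (m × n) × Bool → Ω → ℝ}
    (hX : ∀ ω q, X (q, true) ω = (G ω q.1 q.2).re ∧ X (q, false) ω = (G ω q.1 q.2).im)
    {v : ℝ≥0} (hv : v ≠ 0) (hgauss : ∀ i, P.map (X i) = gaussianReal 0 v)
    (hindep : iIndepFun X P) {s : ℝ} (hs₀ : 0 ≤ s) (hs : 2 * v * s < 1) (t : ℝ) :
    P.real {ω | t ≤ (trace ((G ω)ᴴ * G ω)).re} ≤
      exp (-s * t) *
        (∫ x, exp (s * x ^ 2) ∂gaussianReal 0 v) ^ Fintype.card ((m × n) × Bool) := by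
  have htrace : ∀ ω, (trace ((G ω)ᴴ * G ω)).re = ∑ i, X i ω ^ 2 := fun ω ↦ by
    simp only [re_trace_conjTranspose_mul_self, Fintype.sum_prod_type, Fintype.sum_bool, hX]
  simp only [htrace]
  exact measureReal_sum_sq_ge_le_of_iIndepFun hv hgauss hindep hs₀ hs t

lemma measureReal_compl_forall_lt_le {Ω : Type*} [MeasurableSpace Ω] {μ : Measure Ω}
    [IsFiniteMeasure μ] {p : ℕ → Ω → Prop} {B : ℝ} (h : ∀ k, μ.real {ω | ¬p k ω} ≤ B) (n : ℕ) :
    μ.real {ω | ∀ k < n, p k ω}ᶜ ≤ n * B := by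
  calc μ.real {ω | ∀ k < n, p k ω}ᶜ = μ.real (⋃ k ∈ range n, {ω | ¬p k ω}) := by
        congr 1; ext; simp
    _ ≤ ∑ k ∈ range n, μ.real {ω | ¬p k ω} := measureReal_biUnion_finset_le _ _
    _ ≤ n * B := (sum_le_sum fun k _ ↦ h k).trans_eq (by simp)

lemma exp_neg_mul_mul_log_sub_one {η : ℝ} (hη : 0 < η) (s c : ℝ) :
    exp (-s * (c * log η - 1)) = exp s * η ^ (-(s * c)) := by
  rw [rpow_def_of_pos hη, ← exp_add]
  ring_nf

lemma tendsto_measureReal_of_tendsto_compl {Ω ι : Type*} [MeasurableSpace Ω] {μ : Measure Ω}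
    [IsProbabilityMeasure μ] {l : Filter ι} {E : ι → Set Ω}
    (h : Tendsto (fun i ↦ μ.real (E i)ᶜ) l (𝓝 0)) : Tendsto (fun i ↦ μ.real (E i)) l (𝓝 1) := by
  have hlow : ∀ i, 1 - μ.real (E i)ᶜ ≤ μ.real (E i) := fun i ↦ by
    have := measureReal_union_le (μ := μ) (E i) (E i)ᶜ
    rw [Set.union_compl_self, probReal_univ] at this
    linarith
  refine tendsto_of_tendsto_of_tendsto_of_le_of_le ?_ tendsto_const_nhds hlow
    fun _ ↦ measureReal_le_one
  simpa using (tendsto_const_nhds (x := (1 : ℝ))).sub h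

lemma logb_one_add_mul_le {η T c : ℝ} (hη : 1 < η) (hc : 0 < c) (hT : 0 ≤ T)
    (h : T < c * log η - 1) :
    logb 2 (1 + η * T) ≤ logb 2 η + logb 2 (log η) + logb 2 c := by
  have hlog : 0 < log η := log_pos hη
  rw [← logb_mul (by positivity) hlog.ne', ← logb_mul (by positivity) hc.ne']
  refine logb_le_logb_of_le one_lt_two (by positivity) ?_
  nlinarith

lemma tendsto_mul_rpow_neg_add_of_le {K : ℝ → ℝ} {a α ε η₁ : ℝ} (hε : 0 < ε)
    (hK : ∀ η ≥ η₁, 0 ≤ K η ∧ K η ≤ a * η ^ α) :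
    Tendsto (fun η ↦ K η * η ^ (-(α + ε))) atTop (𝓝 0) := by
  have hlim : Tendsto (fun η : ℝ ↦ a * η ^ (-ε)) atTop (𝓝 0) := by
    simpa using (tendsto_rpow_neg_atTop hε).const_mul a
  refine squeeze_zero' ?_ ?_ hlim
  · filter_upwards [eventually_ge_atTop η₁, eventually_gt_atTop 0] with η hη hη₀
    exact mul_nonneg (hK η hη).1 (by positivity)
  · filter_upwards [eventually_ge_atTop η₁, eventually_gt_atTop 0] with η hη hη₀
    calc K η * η ^ (-(α + ε)) ≤ a * η ^ α * η ^ (-(α + ε)) := by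
          gcongr
          exact (hK η hη).2
      _ = a * η ^ (-ε) := by
          rw [mul_assoc, ← rpow_add hη₀]
          ring_nf

theorem stmt_19_general (NT NR : ℕ)
    (α : ℝ) (hα : 0 ≤ α)
    {Ω : Type*} [MeasureSpace Ω] [IsProbabilityMeasure (ℙ : Measure Ω)]
    (H : ℕ → Ω → Matrix (Fin NR) (Fin NT) ℂ)
    -- the real coordinates of all the entries of all the matrices:
    (g : (ℕ × (Fin NR × Fin NT) × Bool) → Ω → ℝ)
    (hg : ∀ ω k (q : Fin NR × Fin NT),
      g (k, q, true) ω = (H k ω q.1 q.2).re ∧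
      g (k, q, false) ω = (H k ω q.1 q.2).im)
    -- jointly independent, each real coordinate distributed as N(0, 1/2):
    (hindep : iIndepFun g ℙ)
    (hgauss : ∀ i, Measure.map (g i) ℙ = gaussianReal 0 (1/2))
    -- number of users K(η) = Θ(η^α):
    (K : ℝ → ℕ) (a₁ a₂ η₁ : ℝ)
    (hK : ∀ η ≥ η₁, a₁ * η ^ α ≤ (K η : ℝ) ∧ (K η : ℝ) ≤ a₂ * η ^ α) :
    Tendsto (fun η : ℝ =>
      (ℙ {ω | ∀ k < K η,
        Real.logb 2 (1 + η * (Matrix.trace ((H k ω)ᴴ * H k ω)).re) ≤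
          Real.logb 2 η + Real.logb 2 (Real.log η) + Real.logb 2 (α + 1)}).toReal)
      atTop (nhds 1) := by
  set s : ℝ := (α + 1 / 2) / (α + 1)
  set C : ℝ := exp s * (∫ x, exp (s * x ^ 2) ∂gaussianReal 0 (1 / 2)) ^
    Fintype.card ((Fin NR × Fin NT) × Bool)
  have hs : 2 * ((1 / 2 : ℝ≥0) : ℝ) * s < 1 := by
    have : s < 1 := (div_lt_one (by positivity)).2 (by linarith)
    norm_num [this]
  have hsα : s * (α + 1) = α + 1 / 2 := div_mul_cancel₀ _ (by positivity)
  have hbad : ∀ η > 1, ∀ k, (ℙ : Measure Ω).real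
      {ω | ¬logb 2 (1 + η * (trace ((H k ω)ᴴ * H k ω)).re) ≤
        logb 2 η + logb 2 (log η) + logb 2 (α + 1)} ≤ η ^ (-(α + 1 / 2)) * C := by
    intro η hη k
    have hexp := exp_neg_mul_mul_log_sub_one (by linarith) s (α + 1)
    rw [hsα] at hexp
    refine (measureReal_mono fun ω hω ↦ ?_).trans <|
      (measureReal_re_trace_conjTranspose_mul_self_ge_le (hg · k) (by norm_num)
        (fun _ ↦ hgauss _) (hindep.precomp (Prod.mk_right_injective k)) (by positivity) hs
        ((α + 1) * log η - 1)).trans_eq (by rw [hexp]; ring)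
    refine not_lt.1 fun h ↦ hω (logb_one_add_mul_le hη (by linarith) ?_ h)
    rw [re_trace_conjTranspose_mul_self]
    positivity
  have hlim : Tendsto (fun η : ℝ ↦ (K η : ℝ) * η ^ (-(α + 1 / 2)) * C) atTop (𝓝 0) := by
    simpa using (tendsto_mul_rpow_neg_add_of_le (by norm_num)
      fun η hη ↦ ⟨Nat.cast_nonneg _, (hK η hη).2⟩).mul_const C
  refine tendsto_measureReal_of_tendsto_compl <|
    squeeze_zero' (Eventually.of_forall fun _ ↦ measureReal_nonneg) ?_ hlim
  filter_upwards [eventually_gt_atTop 1] with η hη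
  exact (measureReal_compl_forall_lt_le (hbad η hη) _).trans_eq (mul_assoc _ _ _).symm

/-- Equation (74) in Appendix F of the paper: for K = Θ(η^α) i.i.d. complex
Gaussian channel matrices, the maximum of log₂(1 + η·Tr(Hₖᴴ Hₖ)) is at most
log₂η + log₂log η + log₂(α+1) with probability tending to one as η → ∞. -/
theorem stmt_19 (NT NR : ℕ) (hNT : 1 ≤ NT) (hNR : 1 ≤ NR)
    (α : ℝ) (hα : 0 ≤ α)
    {Ω : Type*} [MeasureSpace Ω] [IsProbabilityMeasure (ℙ : Measure Ω)]
    (H : ℕ → Ω → Matrix (Fin NR) (Fin NT) ℂ)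
    -- the real coordinates of all the entries of all the matrices:
    (g : (ℕ × (Fin NR × Fin NT) × Bool) → Ω → ℝ)
    (hg : ∀ ω k (q : Fin NR × Fin NT),
      g (k, q, true) ω = (H k ω q.1 q.2).re ∧
      g (k, q, false) ω = (H k ω q.1 q.2).im)
    -- jointly independent, each real coordinate distributed as N(0, 1/2):
    (hindep : iIndepFun g ℙ)
    (hgauss : ∀ i, Measure.map (g i) ℙ = gaussianReal 0 (1/2))
    -- number of users K(η) = Θ(η^α):
    (K : ℝ → ℕ) (a₁ a₂ η₁ : ℝ) (ha₁ : 0 < a₁)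
    (hK : ∀ η ≥ η₁, a₁ * η ^ α ≤ (K η : ℝ) ∧ (K η : ℝ) ≤ a₂ * η ^ α) :
    Tendsto (fun η : ℝ =>
      (ℙ {ω | ∀ k < K η,
        Real.logb 2 (1 + η * (Matrix.trace ((H k ω)ᴴ * H k ω)).re) ≤
          Real.logb 2 η + Real.logb 2 (Real.log η) + Real.logb 2 (α + 1)}).toReal)
      atTop (nhds 1) :=
  stmt_19_general NT NR α hα H g hg hindep hgauss K a₁ a₂ η₁ hK
end
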